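/- arXiv:2601.16092 — 9 statements merged into one kernel-verified Lean document; each statement's English description precedes it below -/
import Mathlib

section
/- Let F : C → D be a monoidal functor between rigid monoidal categories, and suppose the functor X ↦ Hom_D(F(X), 1) is representable by an object Z ∈ C. Then there are isomorphisms Hom_D(F(X), F(Y)) ≅ Hom_C(X, Z ⊗ Y) ≅ Hom_C(Z^* ⊗ X, Y), natural in X and Y. -/
open CategoryTheory CategoryTheory.MonoidalCategory
open CategoryTheory.Functor.LaxMonoidal CategoryTheory.Functor.OplaxMonoidal

section Aux

variable {C D : Type*} [Category C] [Category D]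
  [MonoidalCategory C] [MonoidalCategory D]
  (F : C ⥤ D) [F.Monoidal]

/-- Push an exact pairing forward along a monoidal functor. -/
def mapExactPairing (A B : C) [ExactPairing A B] :
    ExactPairing (F.obj A) (F.obj B) where
  coevaluation' := ε F ≫ F.map (η_ A B) ≫ δ F A B
  evaluation' := μ F B A ≫ F.map (ε_ A B) ≫ η F
  coevaluation_evaluation' := by
    have h1 : F.obj B ◁ F.map (η_ A B) =
        μ F B (𝟙_ C) ≫ F.map (B ◁ η_ A B) ≫ δ F B (A ⊗ B) := by
      rw [Functor.Monoidal.map_whiskerLeft]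
      simp only [Functor.Monoidal.μ_δ_assoc, Category.assoc, Functor.Monoidal.μ_δ,
        Category.comp_id]
    simp only [MonoidalCategory.whiskerLeft_comp, comp_whiskerRight, Category.assoc, h1,
      Functor.OplaxMonoidal.associativity_inv_assoc,
      Functor.Monoidal.whiskerRight_δ_μ_assoc,
      Functor.OplaxMonoidal.δ_natural_left_assoc,
      Functor.LaxMonoidal.right_unitality, Functor.OplaxMonoidal.left_unitality]
    simp only [← F.map_comp, ← F.map_comp_assoc, Category.assoc]
    rw [ExactPairing.coevaluation_evaluation]
  evaluation_coevaluation' := by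
    have h1 : F.map (η_ A B) ▷ F.obj A =
        μ F (𝟙_ C) A ≫ F.map (η_ A B ▷ A) ≫ δ F (A ⊗ B) A := by
      rw [Functor.Monoidal.map_whiskerRight]
      simp only [Functor.Monoidal.μ_δ_assoc, Category.assoc, Functor.Monoidal.μ_δ,
        Category.comp_id]
    simp only [MonoidalCategory.whiskerLeft_comp, comp_whiskerRight, Category.assoc, h1,
      Functor.OplaxMonoidal.associativity_assoc,
      Functor.Monoidal.whiskerLeft_δ_μ_assoc,
      Functor.OplaxMonoidal.δ_natural_right_assoc,
      Functor.LaxMonoidal.left_unitality, Functor.OplaxMonoidal.right_unitality]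
    simp only [← F.map_comp, ← F.map_comp_assoc, Category.assoc]
    rw [ExactPairing.evaluation_coevaluation]

end Aux

section Aux2

variable {C : Type*} [Category C] [MonoidalCategory C]

lemma trhe_natural_left {X X' Y Y' Z : C} [ExactPairing Y Y'] (f : X' ⟶ X) (g : X ⊗ Y ⟶ Z) :
    tensorRightHomEquiv X' Y Y' Z ((f ▷ Y) ≫ g) = f ≫ tensorRightHomEquiv X Y Y' Z g := by
  simp only [tensorRightHomEquiv, Equiv.coe_fn_mk, Category.assoc, comp_whiskerRight]
  rw [← associator_inv_naturality_left_assoc, whisker_exchange_assoc,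
    ← rightUnitor_inv_naturality_assoc]

lemma trhe_mate {X Y Y' Z : C} [HasLeftDual Y] [HasLeftDual Y'] (k : Y ⟶ Y')
    (g : X ⊗ (ᘁY : C) ⟶ Z) :
    tensorRightHomEquiv X ((ᘁY' : C)) Y' Z ((X ◁ (ᘁk)) ≫ g) =
      tensorRightHomEquiv X ((ᘁY : C)) Y Z g ≫ (Z ◁ k) := by
  simp only [tensorRightHomEquiv, Equiv.coe_fn_mk, Category.assoc, comp_whiskerRight]
  rw [← associator_inv_naturality_middle_assoc, ← MonoidalCategory.whiskerLeft_comp_assoc,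
    coevaluation_comp_leftAdjointMate, MonoidalCategory.whiskerLeft_comp_assoc,
    associator_inv_naturality_right_assoc, whisker_exchange]

lemma tlhe_symm_natural {X X' Y Y' Z Z' : C} [ExactPairing Y Y'] (h : X' ⟶ X) (k : Z ⟶ Z')
    (g : X ⟶ Y ⊗ Z) :
    (tensorLeftHomEquiv X' Y Y' Z').symm (h ≫ g ≫ (Y ◁ k)) =
      (Y' ◁ h) ≫ (tensorLeftHomEquiv X Y Y' Z).symm g ≫ k := by
  simp only [tensorLeftHomEquiv, Equiv.coe_fn_symm_mk, MonoidalCategory.whiskerLeft_comp,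
    Category.assoc, associator_inv_naturality_right_assoc, whisker_exchange_assoc]
  simp

end Aux2

section Aux3

variable {C : Type*} [Category C] [MonoidalCategory C]

lemma trhe_symm_mate {V W A B A' B' : C} [ExactPairing A B] [ExactPairing A' B']
    (κ : B ⟶ B') (m : A' ⟶ A)
    (hcompat : B ◁ m ≫ ε_ A B = κ ▷ A' ≫ ε_ A' B') (g : V ⟶ W ⊗ B) :
    (tensorRightHomEquiv V A' B' W).symm (g ≫ (W ◁ κ)) =
      (V ◁ m) ≫ (tensorRightHomEquiv V A B W).symm g := by
  simp only [tensorRightHomEquiv, Equiv.coe_fn_symm_mk, comp_whiskerRight, Category.assoc]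
  rw [associator_naturality_middle_assoc, whisker_exchange_assoc,
    associator_naturality_right_assoc, ← MonoidalCategory.whiskerLeft_comp_assoc,
    ← MonoidalCategory.whiskerLeft_comp_assoc, hcompat]

end Aux3

section Aux4

variable {C D : Type*} [Category C] [Category D]
  [MonoidalCategory C] [MonoidalCategory D]
  (F : C ⥤ D) [F.Monoidal]

lemma map_eval_compat {Y Y' : C} [HasLeftDual Y] [HasLeftDual Y'] (k : Y ⟶ Y') :
    F.obj Y ◁ F.map (ᘁk) ≫ μ F Y (ᘁY) ≫ F.map (ε_ (ᘁY : C) Y) ≫ η F =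
      F.map k ▷ F.obj (ᘁY' : C) ≫ μ F Y' (ᘁY') ≫ F.map (ε_ (ᘁY' : C) Y') ≫ η F := by
  rw [μ_natural_right_assoc, μ_natural_left_assoc, ← F.map_comp_assoc, ← F.map_comp_assoc,
    leftAdjointMate_comp_evaluation]

variable [RigidCategory C]

/-- The composite equivalence `(F X ⟶ F Y) ≃ (X ⟶ Z ⊗ Y)`. -/
noncomputable def bigEquiv (Z : C) (e : ∀ X : C, (F.obj X ⟶ 𝟙_ D) ≃ (X ⟶ Z)) (X Y : C) :
    (F.obj X ⟶ F.obj Y) ≃ (X ⟶ Z ⊗ Y) :=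
  letI := mapExactPairing F (ᘁY : C) Y
  ((Iso.refl (F.obj X)).homCongr (λ_ (F.obj Y)).symm).trans
    (((tensorRightHomEquiv (F.obj X) (F.obj (ᘁY : C)) (F.obj Y) (𝟙_ D)).symm).trans
      (((Functor.Monoidal.μIso F X (ᘁY : C)).homCongr (Iso.refl (𝟙_ D))).trans
        ((e (X ⊗ (ᘁY : C))).trans
          (tensorRightHomEquiv X ((ᘁY : C)) Y Z))))

lemma bigEquiv_natural_left (Z : C) (e : ∀ X : C, (F.obj X ⟶ 𝟙_ D) ≃ (X ⟶ Z))
    (he : ∀ {X X' : C} (h : X ⟶ X') (u : F.obj X' ⟶ 𝟙_ D),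
      e X (F.map h ≫ u) = h ≫ e X' u)
    {X X' Y : C} (h : X' ⟶ X) (f : F.obj X ⟶ F.obj Y) :
    bigEquiv F Z e X' Y (F.map h ≫ f) = h ≫ bigEquiv F Z e X Y f := by
  letI := mapExactPairing F (ᘁY : C) Y
  simp only [bigEquiv, Equiv.trans_apply, Iso.homCongr_apply, Iso.refl_inv, Iso.refl_hom,
    Category.comp_id, Category.id_comp, Iso.symm_hom, Functor.Monoidal.μIso_inv]
  rw [Category.assoc, tensorRightHomEquiv_symm_naturality,
    Functor.OplaxMonoidal.δ_natural_left_assoc, he, trhe_natural_left]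

lemma bigEquiv_natural_right (Z : C) (e : ∀ X : C, (F.obj X ⟶ 𝟙_ D) ≃ (X ⟶ Z))
    (he : ∀ {X X' : C} (h : X ⟶ X') (u : F.obj X' ⟶ 𝟙_ D),
      e X (F.map h ≫ u) = h ≫ e X' u)
    {X Y Y' : C} (k : Y ⟶ Y') (f : F.obj X ⟶ F.obj Y) :
    bigEquiv F Z e X Y' (f ≫ F.map k) = bigEquiv F Z e X Y f ≫ (Z ◁ k) := by
  letI := mapExactPairing F (ᘁY : C) Y
  letI := mapExactPairing F (ᘁY' : C) Y'
  simp only [bigEquiv, Equiv.trans_apply, Iso.homCongr_apply, Iso.refl_inv, Iso.refl_hom,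
    Category.comp_id, Category.id_comp, Iso.symm_hom, Functor.Monoidal.μIso_inv]
  have hc : F.obj Y ◁ F.map (show (ᘁY' : C) ⟶ (ᘁY : C) from ᘁk) ≫ ε_ (F.obj (ᘁY : C)) (F.obj Y) =
      F.map k ▷ F.obj (ᘁY' : C) ≫ ε_ (F.obj (ᘁY' : C)) (F.obj Y') := by
    show F.obj Y ◁ F.map (show (ᘁY' : C) ⟶ (ᘁY : C) from ᘁk) ≫ (μ F Y (ᘁY) ≫ F.map (ε_ (ᘁY : C) Y) ≫ η F) =
        F.map k ▷ F.obj (ᘁY' : C) ≫ (μ F Y' (ᘁY') ≫ F.map (ε_ (ᘁY' : C) Y') ≫ η F)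
    exact map_eval_compat F k
  rw [Category.assoc, leftUnitor_inv_naturality,
    ← Category.assoc, trhe_symm_mate (F.map k) (F.map (show (ᘁY' : C) ⟶ (ᘁY : C) from ᘁk)) hc,
    Functor.OplaxMonoidal.δ_natural_right_assoc, he, trhe_mate]

end Aux4

/-- Let `F : C ⥤ D` be a (strong) monoidal functor between rigid monoidal categories whose
presheaf `X ↦ Hom_D(F X, 𝟙)` is representable by `Z : C`. Then there are isomorphisms
`Hom_D(F X, F Y) ≃ Hom_C(X, Z ⊗ Y) ≃ Hom_C(Zᘁ ⊗ X, Y)`, natural in `X` and `Y`.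
(Here `Zᘁ` is the dual with coevaluation `𝟙 ⟶ Z ⊗ Zᘁ`, i.e. the `Z^*` of the paper.) -/
theorem hom_equiv_of_representable {C D : Type*} [Category C] [Category D]
    [MonoidalCategory C] [MonoidalCategory D] [RigidCategory C] [RigidCategory D]
    (F : C ⥤ D) [F.Monoidal] (Z : C)
    (e : ∀ X : C, (F.obj X ⟶ 𝟙_ D) ≃ (X ⟶ Z))
    (he : ∀ {X X' : C} (h : X ⟶ X') (u : F.obj X' ⟶ 𝟙_ D),
      e X (F.map h ≫ u) = h ≫ e X' u) :
    ∃ (α : ∀ X Y : C, (F.obj X ⟶ F.obj Y) ≃ (X ⟶ Z ⊗ Y))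
      (β : ∀ X Y : C, (X ⟶ Z ⊗ Y) ≃ (Zᘁ ⊗ X ⟶ Y)),
      (∀ {X X' Y Y' : C} (h : X' ⟶ X) (k : Y ⟶ Y') (f : F.obj X ⟶ F.obj Y),
        α X' Y' (F.map h ≫ f ≫ F.map k) = h ≫ α X Y f ≫ (Z ◁ k)) ∧
      (∀ {X X' Y Y' : C} (h : X' ⟶ X) (k : Y ⟶ Y') (g : X ⟶ Z ⊗ Y),
        β X' Y' (h ≫ g ≫ (Z ◁ k)) = (Zᘁ ◁ h) ≫ β X Y g ≫ k) := by
  refine ⟨bigEquiv F Z e, fun X Y => (tensorLeftHomEquiv X Z (Zᘁ) Y).symm, ?_, ?_⟩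
  · intro X X' Y Y' h k f
    rw [bigEquiv_natural_left F Z e (fun {X X'} h u => he h u),
      bigEquiv_natural_right F Z e (fun {X X'} h u => he h u)]
  · intro X X' Y Y' h k g
    exact tlhe_symm_natural h k g
end

section
/- Let F : C → D be a monoidal functor between rigid monoidal categories such that Hom_D(F(-), 1) is representable by an object Z ∈ C. Then the left dual Z^* and the right dual *Z of Z are isomorphic. -/
open CategoryTheory CategoryTheory.MonoidalCategory

namespace LeftRightDualRepAux

open CategoryTheory.Functor.LaxMonoidal CategoryTheory.Functor.OplaxMonoidal

variable {C D : Type*} [Category C] [Category D] [MonoidalCategory C] [MonoidalCategory D]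

/-- A strong monoidal functor transports exact pairings. -/
noncomputable def mapPair (F : C ⥤ D) [F.Monoidal] (X Y : C) [ExactPairing X Y] :
    ExactPairing (F.obj X) (F.obj Y) where
  coevaluation' := ε F ≫ F.map (η_ X Y) ≫ δ F X Y
  evaluation' := μ F Y X ≫ F.map (ε_ X Y) ≫ η F
  coevaluation_evaluation' := by
    have h1 : F.obj Y ◁ F.map (η_ X Y) =
        μ F Y (𝟙_ C) ≫ F.map (Y ◁ η_ X Y) ≫ δ F Y (X ⊗ Y) := by
      rw [← μ_natural_right_assoc]; simp
    simp only [MonoidalCategory.whiskerLeft_comp, comp_whiskerRight, Category.assoc]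
    rw [h1]
    simp only [Category.assoc]
    rw [Functor.OplaxMonoidal.associativity_inv_assoc,
      Functor.Monoidal.whiskerRight_δ_μ_assoc,
      Functor.OplaxMonoidal.δ_natural_left_assoc,
      ← F.map_comp_assoc, ← F.map_comp_assoc]
    simp only [Category.assoc]
    rw [ExactPairing.coevaluation_evaluation]
    rw [Functor.map_comp, Category.assoc,
      ← Functor.LaxMonoidal.right_unitality_assoc,
      ← Functor.OplaxMonoidal.left_unitality]
  evaluation_coevaluation' := by
    have h1 : F.map (η_ X Y) ▷ F.obj X =
        μ F (𝟙_ C) X ≫ F.map (η_ X Y ▷ X) ≫ δ F (X ⊗ Y) X := by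
      rw [← μ_natural_left_assoc]; simp
    simp only [MonoidalCategory.whiskerLeft_comp, comp_whiskerRight, Category.assoc]
    rw [h1]
    simp only [Category.assoc]
    rw [Functor.OplaxMonoidal.associativity_assoc,
      Functor.Monoidal.whiskerLeft_δ_μ_assoc,
      Functor.OplaxMonoidal.δ_natural_right_assoc,
      ← F.map_comp_assoc, ← F.map_comp_assoc]
    simp only [Category.assoc]
    rw [ExactPairing.evaluation_coevaluation]
    rw [Functor.map_comp, Category.assoc,
      ← Functor.LaxMonoidal.left_unitality_assoc,
      ← Functor.OplaxMonoidal.right_unitality]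

/-- `Hom(F(ᘁV), 𝟙) ≃ Hom(𝟙, F V)` via the transported pairing. -/
noncomputable def E6A (F : C ⥤ D) [F.Monoidal] (V : C) [HasLeftDual V] :
    (F.obj (ᘁV : C) ⟶ 𝟙_ D) ≃ (𝟙_ D ⟶ F.obj V) :=
  letI := mapPair F (ᘁV : C) V
  ((λ_ (F.obj (ᘁV : C))).symm.homCongr (Iso.refl (𝟙_ D))).trans <|
    (tensorRightHomEquiv (𝟙_ D) (F.obj (ᘁV : C)) (F.obj V) (𝟙_ D)).trans <|
      (Iso.refl (𝟙_ D)).homCongr (λ_ (F.obj V))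

lemma E6A_apply (F : C ⥤ D) [F.Monoidal] (V : C) [HasLeftDual V] (u : F.obj (ᘁV : C) ⟶ 𝟙_ D) :
    E6A F V u = ε F ≫ F.map (η_ (ᘁV : C) V) ≫ δ F (ᘁV : C) V ≫ u ▷ F.obj V ≫
      (λ_ (F.obj V)).hom := by
  dsimp [E6A, tensorRightHomEquiv, Iso.homCongr, mapPair, ExactPairing.coevaluation]
  erw [Equiv.coe_fn_mk]
  unfold mapPair
  simp only [comp_whiskerRight, Category.assoc, Category.comp_id]
  monoidal

/-- `Hom(F(Vᘁ), 𝟙) ≃ Hom(𝟙, F V)` via the transported pairing. -/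
noncomputable def E6B (F : C ⥤ D) [F.Monoidal] (V : C) [HasRightDual V] :
    (F.obj (Vᘁ : C) ⟶ 𝟙_ D) ≃ (𝟙_ D ⟶ F.obj V) :=
  letI := mapPair F V (Vᘁ : C)
  ((ρ_ (F.obj (Vᘁ : C))).symm.homCongr (Iso.refl (𝟙_ D))).trans <|
    (tensorLeftHomEquiv (𝟙_ D) (F.obj V) (F.obj (Vᘁ : C)) (𝟙_ D)).trans <|
      (Iso.refl (𝟙_ D)).homCongr (ρ_ (F.obj V))

lemma E6B_apply (F : C ⥤ D) [F.Monoidal] (V : C) [HasRightDual V] (u : F.obj (Vᘁ : C) ⟶ 𝟙_ D) :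
    E6B F V u = ε F ≫ F.map (η_ V (Vᘁ : C)) ≫ δ F V (Vᘁ : C) ≫ F.obj V ◁ u ≫
      (ρ_ (F.obj V)).hom := by
  dsimp [E6B, tensorLeftHomEquiv, Iso.homCongr, mapPair, ExactPairing.coevaluation]
  erw [Equiv.coe_fn_mk]
  unfold mapPair
  simp only [MonoidalCategory.whiskerLeft_comp, Category.assoc, Category.comp_id]
  monoidal

lemma E6A_nat (F : C ⥤ D) [F.Monoidal] {V V' : C} [HasLeftDual V] [HasLeftDual V']
    (k : V ⟶ V') (u : F.obj (ᘁV : C) ⟶ 𝟙_ D) :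
    E6A F V' (F.map (ᘁk) ≫ u) = E6A F V u ≫ F.map k := by
  rw [E6A_apply, E6A_apply]
  simp only [comp_whiskerRight, Category.assoc]
  rw [Functor.OplaxMonoidal.δ_natural_left_assoc, ← F.map_comp_assoc,
    coevaluation_comp_leftAdjointMate, F.map_comp, Category.assoc,
    ← Functor.OplaxMonoidal.δ_natural_right_assoc, whisker_exchange_assoc,
    MonoidalCategory.leftUnitor_naturality]

lemma E6B_nat (F : C ⥤ D) [F.Monoidal] {V V' : C} [HasRightDual V] [HasRightDual V']
    (k : V ⟶ V') (u : F.obj (Vᘁ : C) ⟶ 𝟙_ D) :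
    E6B F V' (F.map (kᘁ) ≫ u) = E6B F V u ≫ F.map k := by
  rw [E6B_apply, E6B_apply]
  simp only [MonoidalCategory.whiskerLeft_comp, Category.assoc]
  rw [Functor.OplaxMonoidal.δ_natural_right_assoc, ← F.map_comp_assoc,
    coevaluation_comp_rightAdjointMate, F.map_comp, Category.assoc,
    ← Functor.OplaxMonoidal.δ_natural_left_assoc, ← whisker_exchange_assoc,
    MonoidalCategory.rightUnitor_naturality]

/-- Naturality of the "mate" construction in the left-dual slot. -/
lemma step3 {U V V' W : C} [HasLeftDual V] [HasLeftDual V'] (t : W ⟶ U ⊗ V) (k : V ⟶ V') :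
    (tensorRightHomEquiv W (ᘁV' : C) V' U).symm (t ≫ U ◁ k) =
      W ◁ (ᘁk) ≫ (tensorRightHomEquiv W (ᘁV : C) V U).symm t := by
  dsimp [tensorRightHomEquiv]
  calc (t ≫ U ◁ k) ▷ (ᘁV' : C) ≫ (α_ _ _ _).hom ≫ U ◁ ε_ (ᘁV' : C) V' ≫ (ρ_ U).hom
      = t ▷ (ᘁV' : C) ≫ (α_ _ _ _).hom ≫ U ◁ (k ▷ (ᘁV' : C) ≫ ε_ (ᘁV' : C) V') ≫
          (ρ_ U).hom := by
        simp only [comp_whiskerRight, Category.assoc, MonoidalCategory.whiskerLeft_comp]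
        rw [associator_naturality_middle_assoc]
    _ = t ▷ (ᘁV' : C) ≫ (α_ _ _ _).hom ≫ U ◁ (V ◁ (ᘁk) ≫ ε_ (ᘁV : C) V) ≫ (ρ_ U).hom := by
        rw [← leftAdjointMate_comp_evaluation]
    _ = W ◁ (ᘁk) ≫ t ▷ (ᘁV : C) ≫ (α_ _ _ _).hom ≫ U ◁ ε_ (ᘁV : C) V ≫ (ρ_ U).hom := by
        simp only [MonoidalCategory.whiskerLeft_comp, Category.assoc]
        rw [← associator_naturality_right_assoc, ← whisker_exchange_assoc]

/-- Naturality of the "mate" construction in the right-dual slot. -/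
lemma step3' {U V V' W : C} [HasRightDual V] [HasRightDual V'] (t : W ⟶ V ⊗ U) (k : V ⟶ V') :
    (tensorLeftHomEquiv W V' (V'ᘁ : C) U).symm (t ≫ k ▷ U) =
      (kᘁ) ▷ W ≫ (tensorLeftHomEquiv W V (Vᘁ : C) U).symm t := by
  dsimp [tensorLeftHomEquiv]
  calc (V'ᘁ : C) ◁ (t ≫ k ▷ U) ≫ (α_ _ _ _).inv ≫ ε_ V' (V'ᘁ : C) ▷ U ≫ (λ_ U).hom
      = (V'ᘁ : C) ◁ t ≫ (α_ _ _ _).inv ≫ (((V'ᘁ : C) ◁ k) ≫ ε_ V' (V'ᘁ : C)) ▷ U ≫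
          (λ_ U).hom := by
        simp only [MonoidalCategory.whiskerLeft_comp, Category.assoc, comp_whiskerRight]
        rw [associator_inv_naturality_middle_assoc]
    _ = (V'ᘁ : C) ◁ t ≫ (α_ _ _ _).inv ≫ (((kᘁ) ▷ V) ≫ ε_ V (Vᘁ : C)) ▷ U ≫ (λ_ U).hom := by
        rw [rightAdjointMate_comp_evaluation]
    _ = (kᘁ) ▷ W ≫ (Vᘁ : C) ◁ t ≫ (α_ _ _ _).inv ≫ ε_ V (Vᘁ : C) ▷ U ≫ (λ_ U).hom := by
        simp only [comp_whiskerRight, Category.assoc]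
        rw [← associator_inv_naturality_left_assoc, whisker_exchange_assoc]

section

variable [RigidCategory C] (F : C ⥤ D) [F.Monoidal] (Z : C)
  (e : ∀ X : C, (F.obj X ⟶ 𝟙_ D) ≃ (X ⟶ Z))

/-- `Hom(Zᘁ, V) ≃ Hom(𝟙_D, F V)`. -/
noncomputable def eqA (V : C) : ((Zᘁ : C) ⟶ V) ≃ (𝟙_ D ⟶ F.obj V) :=
  ((ρ_ (Zᘁ : C)).symm.homCongr (Iso.refl V)).trans <|
    (tensorLeftHomEquiv (𝟙_ C) Z (Zᘁ : C) V).trans <|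
      ((tensorRightHomEquiv (𝟙_ C) (ᘁV : C) V Z).symm).trans <|
        ((λ_ (ᘁV : C)).homCongr (Iso.refl Z)).trans <|
          ((e (ᘁV : C)).symm).trans (E6A F V)

lemma eqA_apply (V : C) (x : (Zᘁ : C) ⟶ V) :
    eqA F Z e V x = E6A F V ((e (ᘁV : C)).symm ((λ_ (ᘁV : C)).inv ≫
      (tensorRightHomEquiv (𝟙_ C) (ᘁV : C) V Z).symm
        ((tensorLeftHomEquiv (𝟙_ C) Z (Zᘁ : C) V) ((ρ_ (Zᘁ : C)).hom ≫ x)))) := by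
  simp [eqA, Iso.homCongr]

/-- `Hom(ᘁZ, V) ≃ Hom(𝟙_D, F V)`. -/
noncomputable def eqB (V : C) : ((ᘁZ : C) ⟶ V) ≃ (𝟙_ D ⟶ F.obj V) :=
  ((λ_ (ᘁZ : C)).symm.homCongr (Iso.refl V)).trans <|
    (tensorRightHomEquiv (𝟙_ C) (ᘁZ : C) Z V).trans <|
      ((tensorLeftHomEquiv (𝟙_ C) V (Vᘁ : C) Z).symm).trans <|
        ((ρ_ (Vᘁ : C)).homCongr (Iso.refl Z)).trans <|
          ((e (Vᘁ : C)).symm).trans (E6B F V)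

lemma eqB_apply (V : C) (x : (ᘁZ : C) ⟶ V) :
    eqB F Z e V x = E6B F V ((e (Vᘁ : C)).symm ((ρ_ (Vᘁ : C)).inv ≫
      (tensorLeftHomEquiv (𝟙_ C) V (Vᘁ : C) Z).symm
        ((tensorRightHomEquiv (𝟙_ C) (ᘁZ : C) Z V) ((λ_ (ᘁZ : C)).hom ≫ x)))) := by
  simp [eqB, Iso.homCongr]

set_option linter.unusedSectionVars false

variable (he : ∀ {X X' : C} (h : X ⟶ X') (u : F.obj X' ⟶ 𝟙_ D),
      e X (F.map h ≫ u) = h ≫ e X' u)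

include he

lemma e_symm_comp {X X' : C} (h : X ⟶ X') (m : X' ⟶ Z) :
    (e X).symm (h ≫ m) = F.map h ≫ (e X').symm m := by
  apply (e X).injective
  rw [Equiv.apply_symm_apply, he, Equiv.apply_symm_apply]

lemma eqA_nat {V V' : C} (x : (Zᘁ : C) ⟶ V) (k : V ⟶ V') :
    eqA F Z e V' (x ≫ k) = eqA F Z e V x ≫ F.map k := by
  rw [eqA_apply, eqA_apply, ← Category.assoc, tensorLeftHomEquiv_naturality, step3,
    ← MonoidalCategory.leftUnitor_inv_naturality_assoc, e_symm_comp F Z e he, E6A_nat]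

lemma eqB_nat {V V' : C} (x : (ᘁZ : C) ⟶ V) (k : V ⟶ V') :
    eqB F Z e V' (x ≫ k) = eqB F Z e V x ≫ F.map k := by
  rw [eqB_apply, eqB_apply, ← Category.assoc, tensorRightHomEquiv_naturality, step3',
    ← MonoidalCategory.rightUnitor_inv_naturality_assoc, e_symm_comp F Z e he, E6B_nat]

end

end LeftRightDualRepAux

/-- Let `F : C ⥤ D` be a (strong) monoidal functor between rigid monoidal categories such
that `Hom_D(F(-), 𝟙)` is representable by `Z : C`. Then the left dual and the right dual of
`Z` are isomorphic. (In Mathlib's conventions, the paper's left dual `Z^*`, with coevaluation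
`𝟙 ⟶ Z ⊗ Z^*`, is `Zᘁ`, and the paper's right dual `*Z` is `ᘁZ`.) -/
theorem leftDual_iso_rightDual_of_representable {C D : Type*} [Category C] [Category D]
    [MonoidalCategory C] [MonoidalCategory D] [RigidCategory C] [RigidCategory D]
    (F : C ⥤ D) [F.Monoidal] (Z : C)
    (e : ∀ X : C, (F.obj X ⟶ 𝟙_ D) ≃ (X ⟶ Z))
    (he : ∀ {X X' : C} (h : X ⟶ X') (u : F.obj X' ⟶ 𝟙_ D),
      e X (F.map h ≫ u) = h ≫ e X' u) :
    Nonempty ((Zᘁ : C) ≅ ᘁZ) := by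
  refine ⟨{ hom := (LeftRightDualRepAux.eqA F Z e (ᘁZ : C)).symm (LeftRightDualRepAux.eqB F Z e (ᘁZ : C) (𝟙 _)),
            inv := (LeftRightDualRepAux.eqB F Z e (Zᘁ : C)).symm (LeftRightDualRepAux.eqA F Z e (Zᘁ : C) (𝟙 _)),
            hom_inv_id := ?_, inv_hom_id := ?_ }⟩
  · apply (LeftRightDualRepAux.eqA F Z e (Zᘁ : C)).injective
    rw [LeftRightDualRepAux.eqA_nat F Z e he, Equiv.apply_symm_apply, ← LeftRightDualRepAux.eqB_nat F Z e he, Category.id_comp,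
      Equiv.apply_symm_apply]
  · apply (LeftRightDualRepAux.eqB F Z e (ᘁZ : C)).injective
    rw [LeftRightDualRepAux.eqB_nat F Z e he, Equiv.apply_symm_apply, ← LeftRightDualRepAux.eqA_nat F Z e he, Category.id_comp,
      Equiv.apply_symm_apply]
end

section
/- Let F : C → D be a monoidal functor between monoidal categories, C' ⊆ C a left rigid monoidal subcategory, and F' a left adjoint of F. Then there is an isomorphism F'(X) ⊗ Y ≅ F'(X ⊗ F(Y)), natural in X ∈ D and Y ∈ C'. -/
open CategoryTheory CategoryTheory.MonoidalCategory

namespace projFormula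

open Functor.LaxMonoidal Functor.OplaxMonoidal

variable {C D : Type*} [Category C] [Category D]
    [MonoidalCategory C] [MonoidalCategory D]
    (F : C ⥤ D) [F.Monoidal]

/-- A strong monoidal functor transports exact pairings. -/
def pairD (Y Z : C) [ExactPairing Y Z] : ExactPairing (F.obj Y) (F.obj Z) where
  coevaluation' := ε F ≫ F.map (η_ Y Z) ≫ δ F Y Z
  evaluation' := μ F Z Y ≫ F.map (ε_ Y Z) ≫ η F
  coevaluation_evaluation' := by
    have h2 : F.obj Z ◁ F.map (η_ Y Z) =
        μ F Z (𝟙_ C) ≫ F.map (Z ◁ η_ Y Z) ≫ δ F Z (Y ⊗ Z) := by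
      rw [← cancel_mono (μ F Z (Y ⊗ Z))]
      simp
    simp only [MonoidalCategory.whiskerLeft_comp, MonoidalCategory.comp_whiskerRight,
      Category.assoc, h2]
    simp
    simp only [← Functor.map_comp_assoc]
    rw [ExactPairing.coevaluation_evaluation]
  evaluation_coevaluation' := by
    have h2 : F.map (η_ Y Z) ▷ F.obj Y =
        μ F (𝟙_ C) Y ≫ F.map (η_ Y Z ▷ Y) ≫ δ F (Y ⊗ Z) Y := by
      rw [← cancel_mono (μ F (Y ⊗ Z) Y)]
      simp
    simp only [MonoidalCategory.whiskerLeft_comp, MonoidalCategory.comp_whiskerRight,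
      Category.assoc, h2]
    simp
    simp only [← Functor.map_comp_assoc]
    rw [ExactPairing.evaluation_coevaluation]

variable (F' : D ⥤ C) (adj : F' ⊣ F)

/-- The canonical "projection" morphism, natural in both variables. -/
def ψmap (X : D) (Y : C) : F'.obj (X ⊗ F.obj Y) ⟶ F'.obj X ⊗ Y :=
  F'.map ((adj.unit.app X ▷ F.obj Y) ≫ μ F (F'.obj X) Y) ≫ adj.counit.app (F'.obj X ⊗ Y)

def μRight (Z : C) : (F ⋙ tensorRight (F.obj Z)) ≅ (tensorRight Z ⋙ F) :=
  NatIso.ofComponents (fun W => Functor.Monoidal.μIso F W Z) (fun f => by simp)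

noncomputable def adjB (Y Z : C) [ExactPairing (F.obj Y) (F.obj Z)] :
    (tensorRight (F.obj Y) ⋙ F') ⊣ (tensorRight Z ⋙ F) :=
  ((tensorRightAdjunction (F.obj Y) (F.obj Z)).comp adj).ofNatIsoRight (μRight F Z)

noncomputable def eIso (Y Z : C) [ExactPairing Y Z] [ExactPairing (F.obj Y) (F.obj Z)] :
    (tensorRight (F.obj Y) ⋙ F') ≅ (F' ⋙ tensorRight Y) :=
  Adjunction.leftAdjointUniq (adjB F F' adj Y Z) (adj.comp (tensorRightAdjunction Y Z))

lemma key (X : D) (Y Z : C) [ExactPairing Y Z] [ExactPairing (F.obj Y) (F.obj Z)]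
    (hcoev : η_ (F.obj Y) (F.obj Z) = ε F ≫ F.map (η_ Y Z) ≫ δ F Y Z) :
    (eIso F F' adj Y Z).hom.app X = ψmap F F' adj X Y := by
  refine Eq.symm ?_
  have h := Adjunction.homEquiv_leftAdjointUniq_hom_app
    (adjB F F' adj Y Z) (adj.comp (tensorRightAdjunction Y Z)) X
  apply_fun (adjB F F' adj Y Z).homEquiv X ((F' ⋙ tensorRight Y).obj X)
  rw [eIso] at *
  rw [h]
  simp only [adjB, Adjunction.ofNatIsoRight, Adjunction.mkOfHomEquiv_homEquiv,
    Equiv.trans_apply, Adjunction.equivHomsetRightOfNatIso_apply,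
    Adjunction.homEquiv_unit, Adjunction.comp_unit_app, Adjunction.mkOfHomEquiv_unit_app,
    μRight, NatIso.ofComponents_hom_app, Functor.Monoidal.μIso_hom]
  simp [tensorRightAdjunction, tensorRightHomEquiv, ψmap, hcoev]
  have hw : adj.unit.app (X ⊗ F.obj Y) ≫
      F.map (F'.map (adj.unit.app X ▷ F.obj Y) ≫ F'.map (μ F (F'.obj X) Y) ≫
        adj.counit.app (F'.obj X ⊗ Y)) =
      (adj.unit.app X ▷ F.obj Y) ≫ μ F (F'.obj X) Y := by
    simp only [Functor.map_comp, ← Functor.comp_map F' F]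
    rw [← adj.unit.naturality_assoc, ← adj.unit.naturality_assoc]
    simp [Functor.comp_map]
  simp only [← Functor.map_comp, ← MonoidalCategory.comp_whiskerRight,
    ← Functor.LaxMonoidal.μ_natural_left]
  rw [← MonoidalCategory.comp_whiskerRight_assoc, hw]
  simp only [MonoidalCategory.comp_whiskerRight, Category.assoc]
  rw [← associator_inv_naturality_left_assoc, whisker_exchange_assoc,
    whisker_exchange_assoc, whisker_exchange_assoc,
    ← rightUnitor_inv_naturality_assoc]
  congr 1
  simp only [Functor.comp_obj]
  have h3 : F.obj (F'.obj X) ◁ F.map (η_ Y Z) =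
      μ F (F'.obj X) (𝟙_ C) ≫ F.map (F'.obj X ◁ η_ Y Z) ≫ δ F (F'.obj X) (Y ⊗ Z) := by
    rw [← cancel_mono (μ F (F'.obj X) (Y ⊗ Z))]
    simp
  simp only [h3, Category.assoc]
  simp

lemma ψmap_natY (X : D) {Y Y' : C} (k : Y ⟶ Y') :
    F'.map (X ◁ F.map k) ≫ ψmap F F' adj X Y' = ψmap F F' adj X Y ≫ (F'.obj X ◁ k) := by
  simp only [ψmap, ← Functor.map_comp_assoc, Category.assoc]
  rw [whisker_exchange_assoc]
  simp only [Functor.comp_obj, Functor.LaxMonoidal.μ_natural_right]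
  simp only [Functor.map_comp, Category.assoc, ← Functor.comp_map F F']
  rw [adj.counit.naturality]
  simp [Functor.comp_map]

noncomputable def projIso (X : D) (Y Z : C) [ExactPairing Y Z] :
    F'.obj X ⊗ Y ≅ F'.obj (X ⊗ F.obj Y) :=
  letI := pairD F Y Z
  ((eIso F F' adj Y Z).app X).symm

lemma projIso_inv (X : D) (Y Z : C) [ExactPairing Y Z] :
    (projIso F F' adj X Y Z).inv = ψmap F F' adj X Y := by
  letI := pairD F Y Z
  exact key F F' adj X Y Z rfl

lemma projIso_natX {X X' : D} (g : X ⟶ X') (Y Z : C) [ExactPairing Y Z] :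
    (F'.map g ▷ Y) ≫ (projIso F F' adj X' Y Z).hom =
      (projIso F F' adj X Y Z).hom ≫ F'.map (g ▷ F.obj Y) := by
  letI := pairD F Y Z
  simpa [projIso] using (eIso F F' adj Y Z).inv.naturality g

lemma projIso_natY (X : D) {Y Y' : C} (k : Y ⟶ Y') (Z Z' : C)
    [ExactPairing Y Z] [ExactPairing Y' Z'] :
    (F'.obj X ◁ k) ≫ (projIso F F' adj X Y' Z').hom =
      (projIso F F' adj X Y Z).hom ≫ F'.map (X ◁ F.map k) := by
  have e := (ψmap_natY F F' adj X k).symm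
  rw [← projIso_inv F F' adj X Y Z, ← projIso_inv F F' adj X Y' Z'] at e
  rw [Iso.inv_comp_eq] at e
  rw [e, Category.assoc, Category.assoc, Iso.inv_hom_id, Category.comp_id]


end projFormula

/-- Projection formula: let `F : C ⥤ D` be a (strong) monoidal functor with left adjoint
`F'`, and let `C'` (given by the predicate `P`) be a full left rigid monoidal subcategory of
`C` (each of its objects `Y` has a dual `Yᘁ` with coevaluation `𝟙 ⟶ Y ⊗ Yᘁ`). Then there is
an isomorphism `F' X ⊗ Y ≅ F' (X ⊗ F Y)`, natural in `X : D` and `Y ∈ C'`. -/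
theorem projection_formula {C D : Type*} [Category C] [Category D]
    [MonoidalCategory C] [MonoidalCategory D]
    (F : C ⥤ D) [F.Monoidal] (F' : D ⥤ C) (adj : F' ⊣ F)
    (P : C → Prop) (hunit : P (𝟙_ C)) (htensor : ∀ {Y Y'}, P Y → P Y' → P (Y ⊗ Y'))
    (hdual : ∀ Y : C, P Y → HasRightDual Y) :
    ∃ iso : ∀ (X : D) (Y : C), P Y → (F'.obj X ⊗ Y ≅ F'.obj (X ⊗ F.obj Y)),
      (∀ {X X' : D} (g : X ⟶ X') (Y : C) (hY : P Y),
        (F'.map g ▷ Y) ≫ (iso X' Y hY).hom = (iso X Y hY).hom ≫ F'.map (g ▷ F.obj Y)) ∧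
      (∀ (X : D) {Y Y' : C} (k : Y ⟶ Y') (hY : P Y) (hY' : P Y'),
        (F'.obj X ◁ k) ≫ (iso X Y' hY').hom =
          (iso X Y hY).hom ≫ F'.map (X ◁ F.map k)) := by
  refine ⟨fun X Y hY =>
    letI : HasRightDual Y := hdual Y hY
    projFormula.projIso F F' adj X Y (Yᘁ), fun {X X'} g Y hY => ?_,
    fun X {Y Y'} k hY hY' => ?_⟩
  · letI : HasRightDual Y := hdual Y hY
    exact projFormula.projIso_natX F F' adj g Y (Yᘁ)
  · letI : HasRightDual Y := hdual Y hY
    letI : HasRightDual Y' := hdual Y' hY'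
    exact projFormula.projIso_natY F F' adj X k (Yᘁ) (Y'ᘁ)
end

section
/- Let F : C → D be a monoidal functor with a left adjoint F', let C' ⊆ C be a left rigid monoidal subcategory, and let f be a morphism in C'. If X ∈ D is an object such that X ⊗ F(f) is a split morphism, then F'(X) ⊗ f is a split morphism in C. -/
open CategoryTheory CategoryTheory.MonoidalCategory

namespace TransferSplittingAux

open CategoryTheory.Functor

variable {C D : Type*} [Category C] [Category D]
    [MonoidalCategory C] [MonoidalCategory D]
    (F : C ⥤ D) [F.Monoidal] (F' : D ⥤ C) (adj : F' ⊣ F)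

/-- The projection-formula map `F'(Z ⊗ F W) ⟶ F' Z ⊗ W`. -/
def nu (Z : D) (W : C) : F'.obj (Z ⊗ F.obj W) ⟶ F'.obj Z ⊗ W :=
  F'.map ((adj.unit.app Z ▷ F.obj W) ≫ LaxMonoidal.μ F (F'.obj Z) W) ≫
    adj.counit.app (F'.obj Z ⊗ W)

lemma nu_natural_right (Z : D) {W W' : C} (w : W ⟶ W') :
    F'.map (Z ◁ F.map w) ≫ nu F F' adj Z W' = nu F F' adj Z W ≫ (F'.obj Z ◁ w) := by
  dsimp [nu]
  rw [← F'.map_comp_assoc, whisker_exchange_assoc, LaxMonoidal.μ_natural_right]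
  simp [Adjunction.counit_naturality]

lemma nu_natural_left {Z Z' : D} (z : Z ⟶ Z') (W : C) :
    F'.map (z ▷ F.obj W) ≫ nu F F' adj Z' W = nu F F' adj Z W ≫ (F'.map z ▷ W) := by
  dsimp [nu]
  rw [← F'.map_comp_assoc, ← comp_whiskerRight_assoc, ← adj.unit_naturality,
    comp_whiskerRight_assoc, LaxMonoidal.μ_natural_left]
  simp [Adjunction.counit_naturality]

/-- transpose identity: the adjoint transpose of `nu` is the structure map. -/
lemma unit_comp_map_nu (Z : D) (W : C) :
    adj.unit.app (Z ⊗ F.obj W) ≫ F.map (nu F F' adj Z W) =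
      (adj.unit.app Z ▷ F.obj W) ≫ LaxMonoidal.μ F (F'.obj Z) W := by
  dsimp [nu]
  rw [F.map_comp, ← Category.assoc, adj.unit_naturality, Category.assoc,
    adj.right_triangle_components, Category.comp_id]

end TransferSplittingAux

namespace TransferSplittingAux2
open TransferSplittingAux CategoryTheory.Functor

variable {C D : Type*} [Category C] [Category D]
    [MonoidalCategory C] [MonoidalCategory D]
    (F : C ⥤ D) [F.Monoidal] (F' : D ⥤ C) (adj : F' ⊣ F)

/-- Image of the coevaluation of `W` under `F`, as a map `𝟙_D ⟶ F W ⊗ F Wᘁ`. -/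
def eD (W : C) [HasRightDual W] : 𝟙_ D ⟶ F.obj W ⊗ F.obj (Wᘁ) :=
  LaxMonoidal.ε F ≫ F.map (η_ W (Wᘁ)) ≫ OplaxMonoidal.δ F W (Wᘁ)

lemma eD_natural {Y Y' : C} [HasRightDual Y] [HasRightDual Y'] (f : Y ⟶ Y') :
    eD F Y ≫ (F.map f ▷ F.obj (Yᘁ)) = eD F Y' ≫ (F.obj Y' ◁ F.map (fᘁ)) := by
  dsimp [eD]
  simp only [Category.assoc, OplaxMonoidal.δ_natural_left, OplaxMonoidal.δ_natural_right,
    ← F.map_comp_assoc]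
  rw [coevaluation_comp_rightAdjointMate]

/-- The "coevaluation-side" component: `F' X ⟶ F'(X ⊗ F W) ⊗ Wᘁ`. -/
def kMap (X : D) (W : C) [HasRightDual W] : F'.obj X ⟶ F'.obj (X ⊗ F.obj W) ⊗ (Wᘁ) :=
  F'.map ((ρ_ X).inv ≫ (X ◁ eD F W) ≫ (α_ X (F.obj W) (F.obj (Wᘁ))).inv) ≫
    nu F F' adj (X ⊗ F.obj W) (Wᘁ)

lemma kMap_natural (X : D) {Y Y' : C} [HasRightDual Y] [HasRightDual Y'] (f : Y ⟶ Y') :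
    kMap F F' adj X Y ≫ (F'.map (X ◁ F.map f) ▷ (Yᘁ)) =
      kMap F F' adj X Y' ≫ (F'.obj (X ⊗ F.obj Y') ◁ (fᘁ)) := by
  dsimp [kMap]
  rw [Category.assoc, ← nu_natural_left F F' adj (X ◁ F.map f) (Yᘁ),
    ← Category.assoc, ← F'.map_comp]
  conv_rhs => rw [Category.assoc, ← nu_natural_right F F' adj (X ⊗ F.obj Y') (fᘁ),
    ← Category.assoc, ← F'.map_comp]
  have : ((ρ_ X).inv ≫ (X ◁ eD F Y) ≫ (α_ X (F.obj Y) (F.obj (Yᘁ))).inv) ≫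
        ((X ◁ F.map f) ▷ F.obj (Yᘁ)) =
      ((ρ_ X).inv ≫ (X ◁ eD F Y') ≫ (α_ X (F.obj Y') (F.obj (Y'ᘁ))).inv) ≫
        ((X ⊗ F.obj Y') ◁ F.map (fᘁ)) := by
    simp only [Category.assoc, ← associator_inv_naturality_middle,
      ← associator_inv_naturality_right, ← MonoidalCategory.whiskerLeft_comp_assoc]
    rw [eD_natural F f]
  rw [this]

end TransferSplittingAux2

namespace TransferSplittingAux2
open TransferSplittingAux CategoryTheory.Functor

variable {C D : Type*} [Category C] [Category D]
    [MonoidalCategory C] [MonoidalCategory D]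
    (F : C ⥤ D) [F.Monoidal] (F' : D ⥤ C) (adj : F' ⊣ F)

/-- The map `F' X ⊗ W ⟶ F'(X ⊗ F W)` (one half of the projection formula). -/
def iota (X : D) (W : C) [HasRightDual W] : F'.obj X ⊗ W ⟶ F'.obj (X ⊗ F.obj W) :=
  (kMap F F' adj X W ▷ W) ≫ (α_ _ _ _).hom ≫
    (F'.obj (X ⊗ F.obj W) ◁ ε_ W (Wᘁ)) ≫ (ρ_ _).hom

lemma iota_natural (X : D) {Y Y' : C} [HasRightDual Y] [HasRightDual Y'] (f : Y ⟶ Y') :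
    (F'.obj X ◁ f) ≫ iota F F' adj X Y' = iota F F' adj X Y ≫ F'.map (X ◁ F.map f) := by
  dsimp [iota]
  rw [whisker_exchange_assoc, associator_naturality_right_assoc,
    ← MonoidalCategory.whiskerLeft_comp_assoc, ← rightAdjointMate_comp_evaluation,
    MonoidalCategory.whiskerLeft_comp_assoc, ← associator_naturality_middle_assoc,
    ← comp_whiskerRight_assoc, ← kMap_natural, comp_whiskerRight_assoc,
    associator_naturality_left_assoc, ← whisker_exchange_assoc]
  simp [rightUnitor_naturality]

lemma proj_coherence (P W : C) [HasRightDual W] :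
    (ρ_ (F.obj P)).inv ≫ (F.obj P ◁ eD F W) ≫ (α_ (F.obj P) (F.obj W) (F.obj (Wᘁ))).inv ≫
      (LaxMonoidal.μ F P W ▷ F.obj (Wᘁ)) ≫ LaxMonoidal.μ F (P ⊗ W) (Wᘁ) =
    F.map ((ρ_ P).inv ≫ (P ◁ η_ W (Wᘁ)) ≫ (α_ P W (Wᘁ)).inv) := by
  dsimp [eD]
  simp

lemma kMap_nu (X : D) (W : C) [HasRightDual W] :
    kMap F F' adj X W ≫ (nu F F' adj X W ▷ (Wᘁ)) =
      (ρ_ (F'.obj X)).inv ≫ (F'.obj X ◁ η_ W (Wᘁ)) ≫ (α_ _ _ _).inv := by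
  have h1 : nu F F' adj (X ⊗ F.obj W) (Wᘁ) ≫ (nu F F' adj X W ▷ (Wᘁ)) =
      F'.map ((((adj.unit.app X ▷ F.obj W) ≫ LaxMonoidal.μ F (F'.obj X) W) ▷ F.obj (Wᘁ)) ≫
        LaxMonoidal.μ F (F'.obj X ⊗ W) (Wᘁ)) ≫ adj.counit.app ((F'.obj X ⊗ W) ⊗ (Wᘁ)) := by
    rw [← unit_comp_map_nu F F' adj X W, comp_whiskerRight_assoc, LaxMonoidal.μ_natural_left,
      F'.map_comp, F'.map_comp, Category.assoc, Category.assoc]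
    erw [adj.counit_naturality]
    dsimp [nu]
    simp only [Functor.map_comp, Category.assoc]
  have h2 : ((ρ_ X).inv ≫ (X ◁ eD F W) ≫ (α_ X (F.obj W) (F.obj (Wᘁ))).inv) ≫
        (((adj.unit.app X ▷ F.obj W) ≫ LaxMonoidal.μ F (F'.obj X) W) ▷ F.obj (Wᘁ)) ≫
        LaxMonoidal.μ F (F'.obj X ⊗ W) (Wᘁ) =
      adj.unit.app X ≫ F.map ((ρ_ (F'.obj X)).inv ≫ (F'.obj X ◁ η_ W (Wᘁ)) ≫
        (α_ (F'.obj X) W (Wᘁ)).inv) := by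
    rw [← proj_coherence F (F'.obj X) W]
    conv_rhs => erw [rightUnitor_inv_naturality_assoc (adj.unit.app X)]
    erw [← whisker_exchange_assoc, associator_inv_naturality_left_assoc]
    simp only [comp_whiskerRight, Category.assoc, Functor.id_obj]
  dsimp only [kMap]
  rw [Category.assoc, h1, ← F'.map_comp_assoc, h2, F'.map_comp, Category.assoc,
    Adjunction.counit_naturality, adj.left_triangle_components_assoc]

lemma iota_nu (X : D) (W : C) [HasRightDual W] :
    iota F F' adj X W ≫ nu F F' adj X W = 𝟙 (F'.obj X ⊗ W) := by
  dsimp [iota]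
  rw [Category.assoc, Category.assoc, Category.assoc, ← rightUnitor_naturality,
    whisker_exchange_assoc, ← associator_naturality_left_assoc, ← comp_whiskerRight_assoc,
    kMap_nu]
  calc ((ρ_ (F'.obj X)).inv ≫ (F'.obj X ◁ η_ W (Wᘁ)) ≫ (α_ (F'.obj X) W (Wᘁ)).inv) ▷ W ≫
        (α_ (F'.obj X ⊗ W) (Wᘁ) W).hom ≫ ((F'.obj X ⊗ W) ◁ ε_ W (Wᘁ)) ≫
          (ρ_ (F'.obj X ⊗ W)).hom
      = (tensorRightHomEquiv (F'.obj X) W (Wᘁ) (F'.obj X ⊗ W)).symm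
          ((tensorRightHomEquiv (F'.obj X) W (Wᘁ) (F'.obj X ⊗ W)) (𝟙 _)) := by
        dsimp [tensorRightHomEquiv]
        simp
    _ = 𝟙 _ := Equiv.symm_apply_apply _ _

end TransferSplittingAux2


open TransferSplittingAux TransferSplittingAux2 in
/-- Transfer of splitting objects along a monoidal adjunction: let `F : C ⥤ D` be a
(strong) monoidal functor with left adjoint `F'`, and let `f : Y ⟶ Y'` be a morphism
between objects of `C` having duals (lying in a left rigid monoidal subcategory `C'`).
If `X ⊗ F f` is split in `D`, then `F' X ⊗ f` is split in `C`. -/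
theorem transfer_splitting {C D : Type*} [Category C] [Category D]
    [MonoidalCategory C] [MonoidalCategory D]
    (F : C ⥤ D) [F.Monoidal] (F' : D ⥤ C) (adj : F' ⊣ F)
    {Y Y' : C} [HasRightDual Y] [HasRightDual Y'] (f : Y ⟶ Y')
    (X : D)
    (hsplit : ∃ h : X ⊗ F.obj Y' ⟶ X ⊗ F.obj Y,
      (X ◁ F.map f) ≫ h ≫ (X ◁ F.map f) = X ◁ F.map f) :
    ∃ h' : F'.obj X ⊗ Y' ⟶ F'.obj X ⊗ Y,
      (F'.obj X ◁ f) ≫ h' ≫ (F'.obj X ◁ f) = F'.obj X ◁ f := by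
  obtain ⟨h, hh⟩ := hsplit
  refine ⟨iota F F' adj X Y' ≫ F'.map h ≫ nu F F' adj X Y, ?_⟩
  calc (F'.obj X ◁ f) ≫ (iota F F' adj X Y' ≫ F'.map h ≫ nu F F' adj X Y) ≫ (F'.obj X ◁ f)
      = iota F F' adj X Y ≫ F'.map ((X ◁ F.map f) ≫ h ≫ (X ◁ F.map f)) ≫
          nu F F' adj X Y' := by
        rw [← Category.assoc, ← Category.assoc, iota_natural F F' adj X f]
        simp only [Category.assoc, ← nu_natural_right F F' adj X f, Functor.map_comp]
    _ = iota F F' adj X Y ≫ F'.map (X ◁ F.map f) ≫ nu F F' adj X Y' := by rw [hh]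
    _ = (F'.obj X ◁ f) ≫ iota F F' adj X Y' ≫ nu F F' adj X Y' := by
        rw [← Category.assoc, ← iota_natural F F' adj X f, Category.assoc]
    _ = F'.obj X ◁ f := by rw [iota_nu, Category.comp_id]
end

section
/- In an abelian rigid monoidal category with exact tensor product (a tensor category), every projective object P is a global splitting object: for any morphism f, both P ⊗ f and f ⊗ P are split morphisms. -/
open CategoryTheory CategoryTheory.Limits CategoryTheory.MonoidalCategory

section Aux

variable {T : Type*} [Category T] [MonoidalCategory T] [RigidCategory T]

private lemma whiskerLeft_epi {P : T} {A B : T} (e : A ⟶ B) [Epi e] : Epi (P ◁ e) := by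
  haveI : (tensorLeft P).PreservesEpimorphisms :=
    Functor.preservesEpimorphisms_of_adjunction (tensorLeftAdjunction (ᘁP) P)
  exact (tensorLeft P).map_epi e

private lemma whiskerRight_epi {P : T} {A B : T} (e : A ⟶ B) [Epi e] : Epi (e ▷ P) := by
  haveI : (tensorRight P).PreservesEpimorphisms :=
    Functor.preservesEpimorphisms_of_adjunction (tensorRightAdjunction P (Pᘁ))
  exact (tensorRight P).map_epi e

private lemma whiskerLeft_mono {P : T} {A B : T} (m : A ⟶ B) [Mono m] : Mono (P ◁ m) := by
  haveI : (tensorLeft P).PreservesMonomorphisms :=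
    Functor.preservesMonomorphisms_of_adjunction (tensorLeftAdjunction P (Pᘁ))
  exact (tensorLeft P).map_mono m

private lemma whiskerRight_mono {P : T} {A B : T} (m : A ⟶ B) [Mono m] : Mono (m ▷ P) := by
  haveI : (tensorRight P).PreservesMonomorphisms :=
    Functor.preservesMonomorphisms_of_adjunction (tensorRightAdjunction (ᘁP) P)
  exact (tensorRight P).map_mono m

private lemma epi_rightAdjointMate {A B : T} (f : A ⟶ B) [Mono f] : Epi (fᘁ) := by
  constructor
  intro Z x y h
  haveI : Mono (f ▷ Z) := whiskerRight_mono f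
  have h1 : η_ B (Bᘁ) ≫ B ◁ (fᘁ ≫ x) = η_ B (Bᘁ) ≫ B ◁ (fᘁ ≫ y) := by rw [h]
  simp only [MonoidalCategory.whiskerLeft_comp, coevaluation_comp_rightAdjointMate_assoc,
    ← whisker_exchange, Category.assoc] at h1
  have h2 : η_ A (Aᘁ) ≫ A ◁ x = η_ A (Aᘁ) ≫ A ◁ y :=
    (cancel_mono (f ▷ Z)).1 (by simpa only [Category.assoc] using h1)
  have h3 := congrArg (tensorLeftHomEquiv (𝟙_ T) A (Aᘁ) Z).symm h2
  rw [tensorLeftHomEquiv_symm_coevaluation_comp_whiskerLeft,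
    tensorLeftHomEquiv_symm_coevaluation_comp_whiskerLeft] at h3
  exact (cancel_epi (ρ_ (Aᘁ)).hom).1 h3

private lemma epi_leftAdjointMate {A B : T} (f : A ⟶ B) [Mono f] : Epi (ᘁf) := by
  constructor
  intro Z x y h
  haveI : Mono (Z ◁ f) := whiskerLeft_mono f
  have h1 : η_ (ᘁB) B ≫ ((ᘁf) ≫ x) ▷ B = η_ (ᘁB) B ≫ ((ᘁf) ≫ y) ▷ B := by rw [h]
  simp only [comp_whiskerRight, coevaluation_comp_leftAdjointMate_assoc,
    whisker_exchange, Category.assoc] at h1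
  have h2 : η_ (ᘁA) A ≫ x ▷ A = η_ (ᘁA) A ≫ y ▷ A :=
    (cancel_mono (Z ◁ f)).1 (by simpa only [Category.assoc] using h1)
  have h3 := congrArg (tensorRightHomEquiv (𝟙_ T) (ᘁA) A Z).symm h2
  rw [tensorRightHomEquiv_symm_coevaluation_comp_whiskerRight,
    tensorRightHomEquiv_symm_coevaluation_comp_whiskerRight] at h3
  exact (cancel_epi (λ_ (ᘁA)).hom).1 h3

private lemma tensorRightHomEquiv_symm_mate {X A B Z : T} (m : A ⟶ B) (t : X ⟶ Z ⊗ (Bᘁ)) :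
    (X ◁ m) ≫ (tensorRightHomEquiv X B (Bᘁ) Z).symm t =
      (tensorRightHomEquiv X A (Aᘁ) Z).symm (t ≫ Z ◁ (mᘁ)) :=
  calc (X ◁ m) ≫ (tensorRightHomEquiv X B (Bᘁ) Z).symm t
      = (X ◁ m ≫ t ▷ B) ⊗≫ Z ◁ ε_ B (Bᘁ) ≫ (ρ_ Z).hom := by
        dsimp [tensorRightHomEquiv]; monoidal
    _ = t ▷ A ⊗≫ Z ◁ ((Bᘁ) ◁ m ≫ ε_ B (Bᘁ)) ≫ (ρ_ Z).hom := by
        rw [whisker_exchange]; monoidal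
    _ = t ▷ A ⊗≫ Z ◁ ((mᘁ) ▷ A ≫ ε_ A (Aᘁ)) ≫ (ρ_ Z).hom := by
        rw [rightAdjointMate_comp_evaluation]
    _ = (t ≫ Z ◁ (mᘁ)) ▷ A ⊗≫ Z ◁ ε_ A (Aᘁ) ≫ (ρ_ Z).hom := by
        rw [comp_whiskerRight]; monoidal
    _ = (tensorRightHomEquiv X A (Aᘁ) Z).symm (t ≫ Z ◁ (mᘁ)) := by
        dsimp [tensorRightHomEquiv]; monoidal

private lemma tensorLeftHomEquiv_symm_mate {X A B Z : T} (m : A ⟶ B) (t : X ⟶ (ᘁB) ⊗ Z) :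
    (m ▷ X) ≫ (tensorLeftHomEquiv X (ᘁB) B Z).symm t =
      (tensorLeftHomEquiv X (ᘁA) A Z).symm (t ≫ (ᘁm) ▷ Z) :=
  calc (m ▷ X) ≫ (tensorLeftHomEquiv X (ᘁB) B Z).symm t
      = (m ▷ X ≫ B ◁ t) ⊗≫ ε_ (ᘁB) B ▷ Z ≫ (λ_ Z).hom := by
        dsimp [tensorLeftHomEquiv]; monoidal
    _ = A ◁ t ⊗≫ ((A ◁ (ᘁm) ≫ ε_ (ᘁA) A) ▷ Z) ≫ (λ_ Z).hom := by
        rw [← whisker_exchange, leftAdjointMate_comp_evaluation]; monoidal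
    _ = A ◁ (t ≫ (ᘁm) ▷ Z) ⊗≫ ε_ (ᘁA) A ▷ Z ≫ (λ_ Z).hom := by
        rw [MonoidalCategory.whiskerLeft_comp]; monoidal
    _ = (tensorLeftHomEquiv X (ᘁA) A Z).symm (t ≫ (ᘁm) ▷ Z) := by
        dsimp [tensorLeftHomEquiv]; monoidal

private lemma retraction_whiskerLeft_mono {P : T} (hP : Projective P) {I Y : T} (m : I ⟶ Y)
    [Mono m] : ∃ r : P ⊗ Y ⟶ P ⊗ I, (P ◁ m) ≫ r = 𝟙 (P ⊗ I) := by
  haveI := hP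
  haveI : Epi (mᘁ) := epi_rightAdjointMate m
  haveI : Epi ((P ⊗ I) ◁ (mᘁ)) := whiskerLeft_epi _
  set c : P ⟶ (P ⊗ I) ⊗ (Iᘁ) := tensorRightHomEquiv P I (Iᘁ) (P ⊗ I) (𝟙 (P ⊗ I)) with hc
  set t : P ⟶ (P ⊗ I) ⊗ (Yᘁ) := Projective.factorThru c ((P ⊗ I) ◁ (mᘁ)) with ht
  refine ⟨(tensorRightHomEquiv P Y (Yᘁ) (P ⊗ I)).symm t, ?_⟩
  rw [tensorRightHomEquiv_symm_mate, Projective.factorThru_comp, hc, Equiv.symm_apply_apply]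

private lemma retraction_whiskerRight_mono {P : T} (hP : Projective P) {I Y : T} (m : I ⟶ Y)
    [Mono m] : ∃ r : Y ⊗ P ⟶ I ⊗ P, (m ▷ P) ≫ r = 𝟙 (I ⊗ P) := by
  haveI := hP
  haveI : Epi (ᘁm) := epi_leftAdjointMate m
  haveI : Epi ((ᘁm) ▷ (I ⊗ P)) := whiskerRight_epi _
  set c : P ⟶ (ᘁI) ⊗ (I ⊗ P) := tensorLeftHomEquiv P (ᘁI) I (I ⊗ P) (𝟙 (I ⊗ P)) with hc
  set t : P ⟶ (ᘁY) ⊗ (I ⊗ P) := Projective.factorThru c ((ᘁm) ▷ (I ⊗ P)) with ht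
  refine ⟨(tensorLeftHomEquiv P (ᘁY) Y (I ⊗ P)).symm t, ?_⟩
  rw [tensorLeftHomEquiv_symm_mate, Projective.factorThru_comp, hc, Equiv.symm_apply_apply]

private lemma projective_tensor_left {P : T} (hP : Projective P) (Z : T) : Projective (P ⊗ Z) := by
  haveI : (tensorRight (Zᘁ)).PreservesEpimorphisms :=
    Functor.preservesEpimorphisms_of_adjunction (tensorRightAdjunction (Zᘁ) ((Zᘁ)ᘁ))
  exact (tensorRightAdjunction Z (Zᘁ)).map_projective P hP

private lemma projective_tensor_right {P : T} (hP : Projective P) (Z : T) :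
    Projective (Z ⊗ P) := by
  haveI : (tensorLeft (ᘁZ)).PreservesEpimorphisms :=
    Functor.preservesEpimorphisms_of_adjunction (tensorLeftAdjunction (ᘁ(ᘁZ)) (ᘁZ))
  exact (tensorLeftAdjunction (ᘁZ) Z).map_projective P hP

end Aux

/-- In a tensor category (a `k`-linear abelian rigid monoidal category with
`End 𝟙 = k`; the tensor product is then automatically biexact), every projective
object `P` is a global splitting object: for any morphism `f`, both `P ⊗ f` and
`f ⊗ P` are split. -/
theorem projective_is_global_splitting {k : Type*} [Field k]
    {T : Type*} [Category T] [Abelian T] [Linear k T]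
    [MonoidalCategory T] [MonoidalPreadditive T] [MonoidalLinear k T] [RigidCategory T]
    (hEnd : ∀ a : 𝟙_ T ⟶ 𝟙_ T, ∃ c : k, a = c • 𝟙 (𝟙_ T))
    (P : T) (hP : Projective P) :
    ∀ {X Y : T} (f : X ⟶ Y),
      (∃ g : P ⊗ Y ⟶ P ⊗ X, (P ◁ f) ≫ g ≫ (P ◁ f) = P ◁ f) ∧
      (∃ g : Y ⊗ P ⟶ X ⊗ P, (f ▷ P) ≫ g ≫ (f ▷ P) = f ▷ P) := by
  intro X Y f
  set e : X ⟶ image f := factorThruImage f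
  set m : image f ⟶ Y := image.ι f
  have hf : f = e ≫ m := (image.fac f).symm
  constructor
  · -- left tensoring
    haveI : Epi (P ◁ e) := whiskerLeft_epi e
    haveI : Projective (P ⊗ image f) := projective_tensor_left hP _
    obtain ⟨r, hr⟩ := retraction_whiskerLeft_mono hP m
    set s : P ⊗ image f ⟶ P ⊗ X := Projective.factorThru (𝟙 _) (P ◁ e) with hs
    have hse : s ≫ (P ◁ e) = 𝟙 _ := Projective.factorThru_comp _ _
    refine ⟨r ≫ s, ?_⟩
    have hwf : P ◁ f = P ◁ e ≫ P ◁ m := by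
      rw [← MonoidalCategory.whiskerLeft_comp, ← hf]
    rw [hwf]
    calc (P ◁ e ≫ P ◁ m) ≫ (r ≫ s) ≫ P ◁ e ≫ P ◁ m
        = P ◁ e ≫ ((P ◁ m) ≫ r) ≫ (s ≫ (P ◁ e)) ≫ P ◁ m := by
          simp only [Category.assoc]
      _ = P ◁ e ≫ P ◁ m := by rw [hr, hse]; simp
  · haveI : Epi (e ▷ P) := whiskerRight_epi e
    haveI : Projective (image f ⊗ P) := projective_tensor_right hP _
    obtain ⟨r, hr⟩ := retraction_whiskerRight_mono hP m
    set s : image f ⊗ P ⟶ X ⊗ P := Projective.factorThru (𝟙 _) (e ▷ P) with hs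
    have hse : s ≫ (e ▷ P) = 𝟙 _ := Projective.factorThru_comp _ _
    refine ⟨r ≫ s, ?_⟩
    have hwf : f ▷ P = e ▷ P ≫ m ▷ P := by
      rw [← comp_whiskerRight, ← hf]
    rw [hwf]
    calc (e ▷ P ≫ m ▷ P) ≫ (r ≫ s) ≫ e ▷ P ≫ m ▷ P
        = e ▷ P ≫ ((m ▷ P) ≫ r) ≫ (s ≫ (e ▷ P)) ≫ m ▷ P := by
          simp only [Category.assoc]
      _ = e ▷ P ≫ m ▷ P := by rw [hr, hse]; simp
end

section
/- In a tensor category, if P is an object such that P ⊗ f is split for every morphism f, then P is projective. Combined with the converse, an object of a tensor category is a global splitting object if and only if it is projective. -/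
open CategoryTheory CategoryTheory.MonoidalCategory

/-- In a tensor category (a `k`-linear abelian rigid monoidal category with `End 𝟙 = k`),
if `P` is an object such that `P ⊗ f` is split for every morphism `f`, then `P` is
projective. -/
theorem projective_of_global_splitting {k : Type*} [Field k]
    {T : Type*} [Category T] [Abelian T] [Linear k T]
    [MonoidalCategory T] [MonoidalPreadditive T] [MonoidalLinear k T] [RigidCategory T]
    (hEnd : ∀ a : 𝟙_ T ⟶ 𝟙_ T, ∃ c : k, a = c • 𝟙 (𝟙_ T))
    (P : T)
    (hsplit : ∀ {X Y : T} (f : X ⟶ Y),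
      ∃ g : P ⊗ Y ⟶ P ⊗ X, (P ◁ f) ≫ g ≫ (P ◁ f) = P ◁ f) :
    Projective P := by
  haveI hP : Limits.PreservesColimitsOfSize.{0,0} (tensorLeft P) :=
    (tensorLeftAdjunction (ᘁP) P).leftAdjoint_preservesColimits
  haveI hQ : Limits.PreservesColimitsOfSize.{0,0} (tensorLeft (ᘁP)) :=
    (tensorLeftAdjunction (ᘁ(ᘁP)) (ᘁP)).leftAdjoint_preservesColimits
  constructor
  intro E X f e he
  obtain ⟨g, hg⟩ := hsplit ((ᘁP) ◁ e)
  haveI h1 : Epi ((ᘁP) ◁ e) := by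
    simpa using (inferInstance : Epi ((tensorLeft (ᘁP)).map e))
  haveI h2 : Epi (P ◁ ((ᘁP) ◁ e)) := by
    simpa using (inferInstance : Epi ((tensorLeft P).map ((ᘁP) ◁ e)))
  have hsec : g ≫ (P ◁ ((ᘁP) ◁ e)) = 𝟙 _ := by
    rw [← cancel_epi (P ◁ ((ᘁP) ◁ e)), Category.comp_id]
    simpa using hg
  refine ⟨(ρ_ P).inv ≫ P ◁ η_ (ᘁP) P ≫ P ◁ ((ᘁP) ◁ f) ≫ g ≫
    (α_ P (ᘁP) E).inv ≫ ε_ (ᘁP) P ▷ E ≫ (λ_ E).hom, ?_⟩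
  simp only [Category.assoc]
  calc (ρ_ P).inv ≫ P ◁ η_ (ᘁP) P ≫ P ◁ ((ᘁP) ◁ f) ≫ g ≫
      (α_ P (ᘁP) E).inv ≫ ε_ (ᘁP) P ▷ E ≫ (λ_ E).hom ≫ e
      = (ρ_ P).inv ≫ P ◁ η_ (ᘁP) P ≫ P ◁ ((ᘁP) ◁ f) ≫ (g ≫ P ◁ ((ᘁP) ◁ e)) ≫
        (α_ P (ᘁP) X).inv ≫ ε_ (ᘁP) P ▷ X ≫ (λ_ X).hom := by
        rw [Category.assoc]
        simp only [← leftUnitor_naturality, ← whisker_exchange_assoc,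
          associator_inv_naturality_right_assoc, Category.assoc]
    _ = f := by
        rw [hsec, Category.id_comp]
        simp only [associator_inv_naturality_right_assoc, whisker_exchange_assoc,
          MonoidalCategory.leftUnitor_naturality,
          ExactPairing.coevaluation_evaluation_assoc]
        simp
end

section
/- Let A be an additive category, P ⊆ A a full additive subcategory consisting of projective objects (objects X such that Hom(X,-) preserves cokernels in A), and assume every object of A has a presentation Q → P → A → 0 with P, Q ∈ P. Then the composite functor A → mod-P, sending A₀ to the restricted functor Hom_A(-, A₀)|_P, is fully faithful. -/
open CategoryTheory CategoryTheory.Limits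

universe v u

variable {A : Type u} [Category.{v} A] [Preadditive A]

/-- The restricted Yoneda functor `A ⥤ PSh(P)`, `X ↦ Hom_A(-, X)|_P`, for a full
subcategory given by a predicate `P`. -/
noncomputable def restrictedYoneda (P : A → Prop) :
    A ⥤ ((ObjectProperty.FullSubcategory P)ᵒᵖ ⥤ AddCommGrpCat.{v}) :=
  preadditiveYoneda ⋙
    (Functor.whiskeringLeft (ObjectProperty.FullSubcategory P)ᵒᵖ Aᵒᵖ AddCommGrpCat.{v}).obj
      (ObjectProperty.ι P).op

open Opposite

/-- If `Hom(W, -)` maps the cokernel cofork of `π` to a colimit cocone, then composition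
with `π` is surjective on morphisms out of `W`. -/
private lemma restrictedYoneda.aux_surj {W Q P₀ X : A} {α : Q ⟶ P₀} {π : P₀ ⟶ X}
    {w : α ≫ π = 0}
    (h1 : IsColimit ((preadditiveCoyoneda.obj (Opposite.op W)).mapCocone
      (CokernelCofork.ofπ π w))) (g : W ⟶ X) : ∃ h : W ⟶ P₀, h ≫ π = g := by
  have h2 := isColimitMapCoconeCoforkEquiv' (preadditiveCoyoneda.obj (Opposite.op W)) w h1
  have hepi : Epi ((preadditiveCoyoneda.obj (Opposite.op W)).map π) :=
    ⟨fun u v huv => Cofork.IsColimit.hom_ext h2 (by simpa using huv)⟩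
  have hs := (AddCommGrpCat.epi_iff_surjective _).mp hepi
  obtain ⟨h, hh⟩ := hs g
  exact ⟨h, hh⟩

/-- Let `A` be an additive category, `P` a full additive subcategory consisting of
projective objects (`Hom(X, -)` preserves cokernels), such that every object of `A` has a
presentation `Q → P₀ → X → 0` with `P₀, Q ∈ P`. Then `X ↦ Hom_A(-, X)|_P` takes values in
finitely presented functors (i.e. lands in `mod-P`) and is fully faithful. -/
theorem restrictedYoneda_fullyFaithful
    [HasFiniteBiproducts A] [HasCokernels A]
    (P : A → Prop)
    (hproj : ∀ X : A, P X → ∀ {M N : A} (g : M ⟶ N) (c : CokernelCofork g),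
      IsColimit c →
        Nonempty (IsColimit ((preadditiveCoyoneda.obj (Opposite.op X)).mapCocone c)))
    (hpres : ∀ X₀ : A, ∃ (Q P₀ : A) (_ : P Q) (_ : P P₀) (α : Q ⟶ P₀) (π : P₀ ⟶ X₀)
      (w : α ≫ π = 0), Nonempty (IsColimit (CokernelCofork.ofπ π w))) :
    (∀ X₀ : A, ∃ (U V : ObjectProperty.FullSubcategory P) (α : U ⟶ V),
        Nonempty ((restrictedYoneda P).obj X₀ ≅ cokernel (preadditiveYoneda.map α))) ∧
    (restrictedYoneda P).Full ∧ (restrictedYoneda P).Faithful := by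
  refine ⟨?_, ?_, ?_⟩
  · -- finite presentation of the restricted Yoneda image
    intro X₀
    obtain ⟨Q, P₀, hQ, hP, α, π, w, ⟨hc⟩⟩ := hpres X₀
    let U : ObjectProperty.FullSubcategory P := ⟨Q, hQ⟩
    let V : ObjectProperty.FullSubcategory P := ⟨P₀, hP⟩
    let α' : U ⟶ V := ObjectProperty.homMk α
    refine ⟨U, V, α', ⟨?_⟩⟩
    have w' : (restrictedYoneda P).map α ≫ (restrictedYoneda P).map π = 0 := by
      rw [← Functor.map_comp, w]
      ext W g
      exact Limits.comp_zero
    have hcol : IsColimit (CokernelCofork.ofπ ((restrictedYoneda P).map π) w') := by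
      apply evaluationJointlyReflectsColimits
      intro k
      exact (isColimitMapCoconeCoforkEquiv'
          ((evaluation (ObjectProperty.FullSubcategory P)ᵒᵖ AddCommGrpCat.{v}).obj k) w').symm
        (isColimitMapCoconeCoforkEquiv' (preadditiveCoyoneda.obj (op k.unop.obj)) w
          (hproj k.unop.obj k.unop.2 α (CokernelCofork.ofπ π w) hc).some)
    let eW : ∀ W : ObjectProperty.FullSubcategory P,
        preadditiveYoneda.obj W ≅ (restrictedYoneda P).obj W.obj := fun W =>
      NatIso.ofComponents (fun k => AddEquiv.toAddCommGrpIso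
        { toFun := fun f => f.hom, invFun := fun f => ObjectProperty.homMk f,
          left_inv := fun _ => rfl, right_inv := fun _ => rfl, map_add' := fun _ _ => rfl })
        (by intros; ext; rfl)
    have w'' : preadditiveYoneda.map α' ≫ ((eW V).hom ≫ (restrictedYoneda P).map π) = 0 := by
      rw [← Category.assoc, show preadditiveYoneda.map α' ≫ (eW V).hom =
        (eW U).hom ≫ (restrictedYoneda P).map α from by ext k x; rfl, Category.assoc, w',
        comp_zero]
    have hcol' : IsColimit (CokernelCofork.ofπ ((eW V).hom ≫ (restrictedYoneda P).map π) w'') :=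
      Cofork.isColimitOfIsos _ hcol _ (eW U).symm (eW V).symm (Iso.refl _)
        (by ext k x; rfl) (by simp) (by simp)
    exact IsColimit.coconePointUniqueUpToIso hcol'
      (colimit.isColimit (parallelPair (preadditiveYoneda.map α') 0))
  · -- full
    refine ⟨fun {X Y} η => ?_⟩
    obtain ⟨Q, P₀, hQ, hP, α, π, w, ⟨hc⟩⟩ := hpres X
    let U : ObjectProperty.FullSubcategory P := ⟨Q, hQ⟩
    let V : ObjectProperty.FullSubcategory P := ⟨P₀, hP⟩
    let α' : U ⟶ V := ObjectProperty.homMk α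
    let φ : P₀ ⟶ Y := η.app (op V) π
    have hα : α ≫ φ = 0 := by
      have h2 := ConcreteCategory.congr_hom (η.naturality (Quiver.Hom.op α')) π
      have h2' : η.app (op U) (α ≫ π) = α ≫ φ := h2
      rw [w] at h2'
      have hz : η.app (op U) (0 : Q ⟶ X) = 0 := map_zero (η.app (op U)).hom
      rw [hz] at h2'
      exact h2'.symm
    obtain ⟨f, hf⟩ := CokernelCofork.IsColimit.desc' hc φ hα
    have hfπ : π ≫ f = φ := by simpa using hf
    refine ⟨f, ?_⟩
    ext k g
    obtain ⟨h1⟩ := hproj k.unop.obj k.unop.2 α (CokernelCofork.ofπ π w) hc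
    obtain ⟨h, hh⟩ := restrictedYoneda.aux_surj h1 g
    let h' : k.unop ⟶ V := ObjectProperty.homMk h
    have hnat := ConcreteCategory.congr_hom (η.naturality (Quiver.Hom.op h')) π
    have hnat' : η.app k (h ≫ π) = h ≫ φ := hnat
    show g ≫ f = η.app k g
    rw [← hh]
    calc (h ≫ π) ≫ f = h ≫ φ := by rw [Category.assoc, hfπ]
      _ = (show k.unop.obj ⟶ Y from η.app k (h ≫ π)) := hnat'.symm
  · -- faithful
    refine ⟨fun {X Y} f g hfg => ?_⟩
    obtain ⟨Q, P₀, hQ, hP, α, π, w, ⟨hc⟩⟩ := hpres X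
    have hepi : Epi π := ⟨fun u v huv => Cofork.IsColimit.hom_ext hc (by simpa using huv)⟩
    have h1 : π ≫ f = ((restrictedYoneda P).map f).app (op (⟨P₀, hP⟩ : ObjectProperty.FullSubcategory P)) π :=
      rfl
    have h2 : π ≫ g = ((restrictedYoneda P).map g).app (op (⟨P₀, hP⟩ : ObjectProperty.FullSubcategory P)) π :=
      rfl
    rw [hfg] at h1
    exact (cancel_epi π).mp (h1.trans h2.symm)
end

section
/- Let G : C → D be a functor between small categories. The induced functor Ind(G) : Ind(C) → Ind(D) between ind-completions has a right adjoint if and only if for every object X ∈ D, the presheaf Hom_D(G(-), X) : C^op → Set lies in Ind(C), i.e., is a filtered colimit of representable presheaves. -/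
open CategoryTheory CategoryTheory.Limits Opposite

universe v

namespace IndAdjAux

variable {C : Type v} [SmallCategory C]

/-- Translate a morphism `Ind.yoneda.obj A ⟶ X` into an element of the underlying presheaf. -/
noncomputable def fromHom {A : C} {X : Ind C} (f : Ind.yoneda.obj A ⟶ X) :
    ((Ind.inclusion C).obj X).obj (op A) :=
  yonedaEquiv (Ind.yonedaCompInclusion.inv.app A ≫ (Ind.inclusion C).map f)

/-- Translate an element of the underlying presheaf into a morphism. -/
noncomputable def toHom {A : C} {X : Ind C} (x : ((Ind.inclusion C).obj X).obj (op A)) :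
    Ind.yoneda.obj A ⟶ X :=
  (Ind.inclusion.fullyFaithful (C := C)).preimage
    (Ind.yonedaCompInclusion.hom.app A ≫ yonedaEquiv.symm x)

lemma toHom_fromHom {A : C} {X : Ind C} (f : Ind.yoneda.obj A ⟶ X) : toHom (fromHom f) = f := by
  apply (Ind.inclusion.fullyFaithful (C := C)).map_injective
  rw [toHom, Functor.FullyFaithful.map_preimage, fromHom, Equiv.symm_apply_apply,
    Iso.hom_inv_id_app_assoc]

lemma fromHom_toHom {A : C} {X : Ind C} (x : ((Ind.inclusion C).obj X).obj (op A)) :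
    fromHom (toHom x) = x := by
  rw [fromHom, toHom, Functor.FullyFaithful.map_preimage, Iso.inv_hom_id_app_assoc,
    Equiv.apply_symm_apply]

/-- `fromHom` as an equivalence. -/
noncomputable def fromHomEquiv (A : C) (X : Ind C) :
    (Ind.yoneda.obj A ⟶ X) ≃ ((Ind.inclusion C).obj X).obj (op A) where
  toFun := fromHom
  invFun := toHom
  left_inv := toHom_fromHom
  right_inv := fromHom_toHom

lemma fromHom_comp {A : C} {X Y : Ind C} (g : Ind.yoneda.obj A ⟶ X) (h : X ⟶ Y) :
    fromHom (g ≫ h) = ((Ind.inclusion C).map h).app (op A) (fromHom g) := by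
  rw [fromHom, fromHom, Functor.map_comp, ← Category.assoc, yonedaEquiv_comp]

lemma fromHom_yoneda_comp {A' A : C} {X : Ind C} (f : A' ⟶ A) (g : Ind.yoneda.obj A ⟶ X) :
    fromHom (Ind.yoneda.map f ≫ g) = ((Ind.inclusion C).obj X).map f.op (fromHom g) := by
  rw [fromHom, fromHom, yonedaEquiv_naturality, Functor.map_comp]
  congr 1
  rw [← Category.assoc, ← Category.assoc]
  congr 1
  exact (Ind.yonedaCompInclusion.inv.naturality f).symm

lemma toHom_map {A A' : Cᵒᵖ} {X : Ind C} (f : A ⟶ A')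
    (x : ((Ind.inclusion C).obj X).obj A) :
    toHom (((Ind.inclusion C).obj X).map f x) = Ind.yoneda.map f.unop ≫ toHom x := by
  have h : fromHom (Ind.yoneda.map f.unop ≫ toHom x) = ((Ind.inclusion C).obj X).map f x := by
    rw [fromHom_yoneda_comp, fromHom_toHom]
    rfl
  conv_lhs => rw [← h]
  rw [toHom_fromHom]

lemma toHom_app {A : Cᵒᵖ} {X Y : Ind C} (h : X ⟶ Y)
    (x : ((Ind.inclusion C).obj X).obj A) :
    toHom (((Ind.inclusion C).map h).app A x) = toHom x ≫ h := by
  have hh : fromHom (toHom x ≫ h) = ((Ind.inclusion C).map h).app A (fromHom (toHom x)) :=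
    fromHom_comp _ _
  rw [fromHom_toHom] at hh
  conv_lhs => rw [← hh]
  rw [toHom_fromHom]

lemma fromHom_yoneda {A' A : C} (f : A' ⟶ A) :
    fromHom (Ind.yoneda.map f) = (Ind.yonedaCompInclusion.inv.app A).app (op A') f := by
  rw [fromHom]
  have h : Ind.yonedaCompInclusion.inv.app A' ≫
      (Ind.inclusion C).map (Ind.yoneda.map f) =
      yoneda.map f ≫ Ind.yonedaCompInclusion.inv.app A :=
    (Ind.yonedaCompInclusion.inv.naturality f).symm
  rw [h, yonedaEquiv_comp, yonedaEquiv_yoneda_map]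

/-- If a natural transformation between functors on `Ind C` preserving filtered colimits is an
isomorphism on the image of `Ind.yoneda`, it is an isomorphism everywhere. -/
lemma isIso_app_aux {E : Type (v + 1)} [Category.{v} E] [HasColimitsOfSize.{v, v} E]
    {P Q : Ind C ⥤ E} [PreservesFilteredColimits P] [PreservesFilteredColimits Q]
    (α : P ⟶ Q) (h : ∀ A : C, IsIso (α.app (Ind.yoneda.obj A))) (X : Ind C) :
    IsIso (α.app X) := by
  let pres := X.presentation
  let F : pres.I ⥤ Ind C := pres.F ⋙ Ind.yoneda
  haveI : ∀ j, IsIso ((Functor.whiskerLeft F α).app j) := fun j => h (pres.F.obj j)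
  haveI : IsIso (Functor.whiskerLeft F α) := NatIso.isIso_of_isIso_app _
  have heq : α.app (colimit F) = (preservesColimitIso P F).hom ≫
      colim.map (Functor.whiskerLeft F α) ≫ (preservesColimitIso Q F).inv := by
    rw [← Iso.inv_comp_eq]
    apply colimit.hom_ext
    intro j
    rw [ι_preservesColimitIso_inv_assoc, α.naturality, colimit.ι_map_assoc,
      ι_preservesColimitIso_inv]
    rfl
  have e : colimit F ≅ X := Ind.colimitPresentationCompYoneda X
  have h2 : α.app X = P.map e.inv ≫ α.app (colimit F) ≫ Q.map e.hom := by
    rw [← α.naturality e.hom, ← Category.assoc, ← P.map_comp, e.inv_hom_id, P.map_id,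
      Category.id_comp]
  rw [h2, heq]
  infer_instance

section Sigma

variable {D : Type v} [SmallCategory D]
variable (G : C ⥤ D) (H : Ind C ⥤ Ind D) (hcomm : Ind.yoneda ⋙ H ≅ G ⋙ Ind.yoneda)

/-- The restriction functor on presheaf categories. -/
noncomputable abbrev res : (Dᵒᵖ ⥤ Type v) ⥤ (Cᵒᵖ ⥤ Type v) :=
  (Functor.whiskeringLeft Cᵒᵖ Dᵒᵖ (Type v)).obj G.op

/-- The canonical natural transformation `incl_C ⟶ H ⋙ incl_D ⋙ res`. -/
noncomputable def sigma : Ind.inclusion C ⟶ H ⋙ Ind.inclusion D ⋙ res G where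
  app X :=
    { app := fun A => TypeCat.ofHom (fun x => fromHom (hcomm.inv.app A.unop ≫ H.map (toHom x)))
      naturality := by
        intro A A' f
        ext x
        dsimp
        rw [toHom_map, Functor.map_comp]
        have h := hcomm.inv.naturality f.unop
        simp only [Functor.comp_map] at h
        rw [← Category.assoc, ← h, Category.assoc, fromHom_yoneda_comp] }
  naturality := by
    intro X Y h
    apply NatTrans.ext
    funext A
    ext x
    dsimp
    rw [toHom_app, Functor.map_comp, ← Category.assoc, fromHom_comp]

/-- The comparison natural transformation `incl_C ⋙ lan ⟶ H ⋙ incl_D`. -/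
noncomputable def psiHom : Ind.inclusion C ⋙ G.op.lan ⟶ H ⋙ Ind.inclusion D where
  app X := G.op.lan.map ((sigma G H hcomm).app X) ≫
    (G.op.lanAdjunction (Type v)).counit.app ((Ind.inclusion D).obj (H.obj X))
  naturality := by
    intro X Y h
    dsimp
    rw [Category.assoc, ← Functor.map_comp_assoc, (sigma G H hcomm).naturality h,
      Functor.map_comp, Category.assoc]
    congr 1
    exact (G.op.lanAdjunction (Type v)).counit.naturality ((Ind.inclusion D).map (H.map h))

lemma psiHom_comm (X : Ind C) :
    G.op.lanUnit.app ((Ind.inclusion C).obj X) ≫ Functor.whiskerLeft G.op ((psiHom G H hcomm).app X) =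
      (sigma G H hcomm).app X := by
  dsimp [psiHom]
  rw [← Category.assoc]
  have h1 := G.op.lanUnit.naturality ((sigma G H hcomm).app X)
  dsimp at h1
  rw [← h1, Category.assoc]
  have h2 := G.op.lanUnit_app_whiskerLeft_lanAdjunction_counit_app
    (H := Type v) ((Ind.inclusion D).obj (H.obj X))
  rw [h2, Category.comp_id]

lemma isIso_psiHom_app_yoneda (A : C) :
    IsIso ((psiHom G H hcomm).app (Ind.yoneda.obj A)) := by
  haveI : ((Ind.inclusion D).obj (H.obj (Ind.yoneda.obj A))).IsLeftKanExtension
      ((sigma G H hcomm).app (Ind.yoneda.obj A)) := by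
    refine (Functor.isLeftKanExtension_iff_of_iso₂ (yonedaMap G A)
      ((sigma G H hcomm).app (Ind.yoneda.obj A))
      ((Ind.yonedaCompInclusion.app A).symm)
      ((Ind.yonedaCompInclusion.app (G.obj A)).symm ≪≫
        (Ind.inclusion D).mapIso (hcomm.app A).symm) ?_).mp inferInstance
    apply NatTrans.ext
    funext B
    ext f
    dsimp [sigma]
    have e1 : (Ind.yonedaCompInclusion.inv.app (G.obj A)).app (op (G.obj B.unop))
        (G.map f) = fromHom (Ind.yoneda.map (G.map f)) := (fromHom_yoneda _).symm
    have e2 : (Ind.yonedaCompInclusion.inv.app A).app (op B.unop) f =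
        fromHom (Ind.yoneda.map f) := (fromHom_yoneda _).symm
    rw [e1, e2, toHom_fromHom, ← fromHom_comp]
    congr 1
    have h := hcomm.inv.naturality f
    simp only [Functor.comp_map] at h
    exact h
  exact (Functor.isLeftKanExtension_iff_isIso
    (show G.op.lan.obj ((Ind.inclusion C).obj (Ind.yoneda.obj A)) ⟶
        (Ind.inclusion D).obj (H.obj (Ind.yoneda.obj A)) from
      (psiHom G H hcomm).app (Ind.yoneda.obj A))
    (G.op.lanUnit.app ((Ind.inclusion C).obj (Ind.yoneda.obj A)))
    ((sigma G H hcomm).app (Ind.yoneda.obj A))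
    (psiHom_comm G H hcomm (Ind.yoneda.obj A))).mp inferInstance

variable [PreservesFilteredColimits H]

/-- The key comparison isomorphism `incl_C ⋙ lan ≅ H ⋙ incl_D`. -/
noncomputable def psi : Ind.inclusion C ⋙ G.op.lan ≅ H ⋙ Ind.inclusion D := by
  haveI : PreservesColimitsOfSize.{v, v} G.op.lan :=
    (G.op.lanAdjunction (Type v)).leftAdjoint_preservesColimits
  haveI : PreservesFilteredColimits (Ind.inclusion C) :=
    ⟨fun J _ _ => inferInstance⟩
  haveI : PreservesFilteredColimits (Ind.inclusion D) :=
    ⟨fun J _ _ => inferInstance⟩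
  haveI : ∀ X, IsIso ((psiHom G H hcomm).app X) :=
    isIso_app_aux (psiHom G H hcomm) (fun A => isIso_psiHom_app_yoneda G H hcomm A)
  haveI : IsIso (psiHom G H hcomm) := NatIso.isIso_of_isIso_app _
  exact asIso (psiHom G H hcomm)

/-- Restriction along `G` of the underlying presheaf of any ind-object is an ind-object. -/
lemma isIndObject_res (h : ∀ X : D, IsIndObject (G.op ⋙ yoneda.obj X)) (Z : Ind D) :
    IsIndObject ((res G).obj ((Ind.inclusion D).obj Z)) := by
  let pres := Z.presentation
  have hc : IsColimit ((res G).mapCocone pres.cocone) :=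
    isColimitOfPreserves (res G) pres.coconeIsColimit
  have hobj : IsIndObject (colimit (pres.F ⋙ yoneda ⋙ res G)) := by
    refine isIndObject_colimit pres.I _ (fun i => ?_)
    exact h (pres.F.obj i)
  exact @IsIndObject.map _ _ _ _ ((colimit.isColimit (pres.F ⋙ yoneda ⋙ res G)).coconePointUniqueUpToIso hc).hom (Iso.isIso_hom _) hobj

/-- The right adjoint. -/
noncomputable def Rfun (h : ∀ X : D, IsIndObject (G.op ⋙ yoneda.obj X)) : Ind D ⥤ Ind C :=
  ObjectProperty.lift _ (Ind.inclusion D ⋙ res G)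
    (fun Z => isIndObject_res G h Z) ⋙ (Ind.equivalence C).inverse

/-- Compatibility of `Rfun` with the restriction functor. -/
noncomputable def RfunIso (h : ∀ X : D, IsIndObject (G.op ⋙ yoneda.obj X)) :
    Ind.inclusion D ⋙ res G ≅ Rfun G h ⋙ Ind.inclusion C :=
  (ObjectProperty.liftCompιIso _ _ _).symm ≪≫
    (Functor.isoWhiskerLeft (ObjectProperty.lift _ (Ind.inclusion D ⋙ res G)
      (fun Z => isIndObject_res G h Z))
      ((Ind.equivalence C).invFunIdAssoc (ObjectProperty.ι _))).symm

/-- The backward direction: existence of the right adjoint. -/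
noncomputable def adjBack (h : ∀ X : D, IsIndObject (G.op ⋙ yoneda.obj X)) :
    H ⊣ Rfun G h :=
  (G.op.lanAdjunction (Type v)).restrictFullyFaithful
    (Ind.inclusion.fullyFaithful (C := C)) (Ind.inclusion.fullyFaithful (C := D))
    (psi G H hcomm) (RfunIso G h)

omit [PreservesFilteredColimits H] in
include hcomm in
lemma forward (R : Ind D ⥤ Ind C) (adj : H ⊣ R) (X : D) :
    IsIndObject (G.op ⋙ yoneda.obj X) := by
  have hio : IsIndObject ((Ind.inclusion C).obj (R.obj (Ind.yoneda.obj X))) :=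
    Ind.isIndObject_inclusion_obj _
  let comp : ∀ A : Cᵒᵖ, (G.obj A.unop ⟶ X) ≃
      ((Ind.inclusion C).obj (R.obj (Ind.yoneda.obj X))).obj (op A.unop) := fun A =>
    Ind.yoneda.fullyFaithful.homEquiv.trans
      (((hcomm.app A.unop).symm.homCongr (Iso.refl (Ind.yoneda.obj X))).trans
        ((adj.homEquiv _ _).trans (fromHomEquiv A.unop (R.obj (Ind.yoneda.obj X)))))
  have eiso : G.op ⋙ yoneda.obj X ≅ (Ind.inclusion C).obj (R.obj (Ind.yoneda.obj X)) := by
    refine NatIso.ofComponents (fun A => (comp A).toIso) ?_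
    intro A A' f
    ext u
    change (comp A') (G.map f.unop ≫ u) = ((Ind.inclusion C).obj (R.obj (Ind.yoneda.obj X))).map f (comp A u)
    dsimp [comp, fromHomEquiv, Functor.FullyFaithful.homEquiv, Iso.homCongr]
    rw [Category.comp_id, Category.comp_id, Functor.map_comp]
    have hn := hcomm.hom.naturality f.unop
    simp only [Functor.comp_map] at hn
    rw [← Category.assoc, ← hn, Category.assoc, Adjunction.homEquiv_naturality_left,
      fromHom_yoneda_comp]
    rfl
  exact IsIndObject.map eiso.inv hio

end Sigma

end IndAdjAux

/-- Let `G : C ⥤ D` be a functor between small categories and let `H : Ind C ⥤ Ind D` be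
the induced functor `Ind(G)` (i.e. `H` preserves filtered colimits and extends `G` along the
Yoneda embeddings). Then `H` has a right adjoint if and only if, for every `X : D`, the
presheaf `Hom_D(G(-), X) : Cᵒᵖ ⥤ Type` is an ind-object, i.e. a filtered colimit of
representables. -/
theorem ind_extension_has_right_adjoint_iff
    {C D : Type v} [SmallCategory C] [SmallCategory D]
    (G : C ⥤ D) (H : Ind C ⥤ Ind D) [PreservesFilteredColimits H]
    (hcomm : Ind.yoneda ⋙ H ≅ G ⋙ Ind.yoneda) :
    (∃ R : Ind D ⥤ Ind C, Nonempty (H ⊣ R)) ↔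
      ∀ X : D, IsIndObject (G.op ⋙ yoneda.obj X) := by
  constructor
  · rintro ⟨R, ⟨adj⟩⟩ X
    exact IndAdjAux.forward G H hcomm R adj X
  · intro h
    exact ⟨IndAdjAux.Rfun G h, ⟨IndAdjAux.adjBack G H hcomm h⟩⟩
end

section
/- Let C be a k-linear rigid monoidal category satisfying: (Ex1) the map Hom(1,V) ⊗_k Hom(U,1) → Hom(U,V), (v,u) ↦ v∘u, is injective for all U, V; and (Ex2) whenever a tensor product f ⊗ g of morphisms factors through the tensor unit 1, both f and g are sums of morphisms factoring through 1. Then every nonzero morphism u : U → 1 is a coequalizer of the pair u ⊗ id_U, id_U ⊗ u : U ⊗ U → U. -/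
open CategoryTheory CategoryTheory.MonoidalCategory

set_option maxHeartbeats 1600000

section AuxCoherence

variable {C : Type*} [Category C] [MonoidalCategory C]

private theorem aux_TB1 {U V : C} [HasRightDual U] (a : U ⟶ 𝟙_ C) (g : U ⟶ V) :
    (ρ_ U).inv ≫ (U ◁ η_ U (Uᘁ)) ≫ (α_ U U (Uᘁ)).inv ≫ (((a ▷ U) ≫ (λ_ U).hom ≫ g) ▷ (Uᘁ))
      = a ≫ η_ U (Uᘁ) ≫ g ▷ (Uᘁ) := by
  calc
    _ = 𝟙 _ ⊗≫ (U ◁ η_ U (Uᘁ) ≫ a ▷ (U ⊗ Uᘁ)) ⊗≫ g ▷ (Uᘁ) := by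
      monoidal
    _ = a ≫ η_ U (Uᘁ) ≫ g ▷ (Uᘁ) := by
      rw [whisker_exchange]; monoidal

private theorem aux_TB2 {U V : C} [HasRightDual U] (a b : U ⟶ 𝟙_ C) (w : 𝟙_ C ⟶ V) :
    (ρ_ U).inv ≫ (U ◁ η_ U (Uᘁ)) ≫ (α_ U U (Uᘁ)).inv ≫ (((U ◁ a) ≫ (ρ_ U).hom ≫ (b ≫ w)) ▷ (Uᘁ))
      = b ≫ ((ρ_ (𝟙_ C)).inv ≫ (𝟙_ C ◁ (η_ U (Uᘁ) ≫ (a ▷ (Uᘁ)) ≫ (λ_ (Uᘁ)).hom)) ≫ (w ▷ (Uᘁ))) := by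
  calc
    _ = 𝟙 _ ⊗≫ (U ◁ (η_ U (Uᘁ) ≫ (a ▷ (Uᘁ)) ≫ (λ_ (Uᘁ)).hom) ≫ b ▷ (Uᘁ)) ⊗≫ w ▷ (Uᘁ) := by
      monoidal
    _ = _ := by
      rw [whisker_exchange]; monoidal

private theorem aux_fact {U V : C} [HasRightDual U] (u : U ⟶ 𝟙_ C) (f : U ⟶ V)
    (hf : (u ▷ U) ≫ (λ_ U).hom ≫ f = (U ◁ u) ≫ (ρ_ U).hom ≫ f) :
    f ⊗ₘ (η_ U (Uᘁ) ≫ (u ▷ (Uᘁ)) ≫ (λ_ (Uᘁ)).hom)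
      = ((ρ_ U).hom ≫ u) ≫ (η_ U (Uᘁ) ≫ (f ▷ (Uᘁ))) := by
  calc
    _ = 𝟙 _ ⊗≫ U ◁ η_ U (Uᘁ) ⊗≫ (((U ◁ u) ≫ (ρ_ U).hom ≫ f) ▷ (Uᘁ)) ⊗≫ 𝟙 _ := by
      rw [tensorHom_def']; monoidal
    _ = 𝟙 _ ⊗≫ U ◁ η_ U (Uᘁ) ⊗≫ (((u ▷ U) ≫ (λ_ U).hom ≫ f) ▷ (Uᘁ)) ⊗≫ 𝟙 _ := by
      rw [← hf]
    _ = 𝟙 _ ⊗≫ (U ◁ η_ U (Uᘁ) ≫ u ▷ (U ⊗ Uᘁ)) ⊗≫ f ▷ (Uᘁ) ⊗≫ 𝟙 _ := by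
      monoidal
    _ = _ := by
      rw [whisker_exchange]; monoidal

private theorem aux_P {U V : C} [HasRightDual U] (u : U ⟶ 𝟙_ C) (w : 𝟙_ C ⟶ V) :
    (λ_ U).inv ≫ (((ρ_ (𝟙_ C)).inv ≫ (𝟙_ C ◁ (η_ U (Uᘁ) ≫ (u ▷ (Uᘁ)) ≫ (λ_ (Uᘁ)).hom)) ≫ (w ▷ (Uᘁ))) ▷ U)
      ≫ (α_ V (Uᘁ) U).hom ≫ (V ◁ ε_ U (Uᘁ)) ≫ (ρ_ V).hom = u ≫ w := by
  calc
    _ = 𝟙 _ ⊗≫ (η_ U (Uᘁ) ≫ u ▷ (Uᘁ)) ▷ U ⊗≫ (w ▷ ((Uᘁ) ⊗ U) ≫ V ◁ ε_ U (Uᘁ)) ⊗≫ 𝟙 _ := by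
      monoidal
    _ = 𝟙 _ ⊗≫ η_ U (Uᘁ) ▷ U ⊗≫ (u ▷ ((Uᘁ) ⊗ U) ≫ 𝟙_ C ◁ ε_ U (Uᘁ)) ⊗≫ w := by
      rw [← whisker_exchange]; monoidal
    _ = 𝟙 _ ⊗≫ (η_ U (Uᘁ) ▷ U ⊗≫ U ◁ ε_ U (Uᘁ)) ⊗≫ u ≫ w := by
      rw [← whisker_exchange]; monoidal
    _ = u ≫ w := by
      rw [ExactPairing.evaluation_coevaluation'']; monoidal

end AuxCoherence

private theorem aux_ex1 {k : Type*} [Field k] {C : Type*} [Category C] [Preadditive C]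
    [Linear k C] [MonoidalCategory C]
    (hEx1 : ∀ (U V : C) (n : ℕ) (us : Fin n → (U ⟶ 𝟙_ C)) (vs : Fin n → (𝟙_ C ⟶ V)),
      LinearIndependent k us → (∑ i, us i ≫ vs i) = 0 → ∀ i, vs i = 0)
    {U V : C} {ι : Type*} (t : Finset ι) (us : ι → (U ⟶ 𝟙_ C)) (vs : ι → (𝟙_ C ⟶ V))
    (hli : LinearIndependent k (fun x : t => us x))
    (hsum : (∑ c ∈ t, us c ≫ vs c) = 0) : ∀ c ∈ t, vs c = 0 := by
  classical
  let e := Fintype.equivFin t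
  have h := hEx1 U V (Fintype.card t) (fun j => us (e.symm j)) (fun j => vs (e.symm j))
    (hli.comp e.symm e.symm.injective)
    (by
      calc ∑ j, us (e.symm j) ≫ vs (e.symm j)
          = ∑ x : t, us x ≫ vs x := Equiv.sum_comp e.symm (fun x : t => us x ≫ vs x)
        _ = ∑ c ∈ t, us c ≫ vs c := Finset.sum_coe_sort t (fun c => us c ≫ vs c)
        _ = 0 := hsum)
  intro c hc
  have h2 := h (e ⟨c, hc⟩)
  simpa using h2

/-- Let `C` be a `k`-linear rigid monoidal category satisfying:
(Ex1) composition induces an injective map `Hom(𝟙,V) ⊗ₖ Hom(U,𝟙) ↪ Hom(U,V)`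
(expressed: if `(uᵢ)` are linearly independent and `∑ uᵢ ≫ vᵢ = 0` then all `vᵢ = 0`); and
(Ex2) whenever `f ⊗ g` factors through `𝟙`, both `f` and `g` are sums of morphisms
factoring through `𝟙`. Then every nonzero `u : U ⟶ 𝟙` is a coequalizer of
`u ⊗ 𝟙_U` and `𝟙_U ⊗ u`: any `f : U ⟶ V` coequalizing the pair factors uniquely as
`f = u ≫ v`. -/
theorem nonzero_to_unit_is_coequalizer {k : Type*} [Field k]
    {C : Type*} [Category C] [Preadditive C] [Linear k C]
    [MonoidalCategory C] [MonoidalPreadditive C] [MonoidalLinear k C] [RigidCategory C]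
    (hEx1 : ∀ (U V : C) (n : ℕ) (us : Fin n → (U ⟶ 𝟙_ C)) (vs : Fin n → (𝟙_ C ⟶ V)),
      LinearIndependent k us → (∑ i, us i ≫ vs i) = 0 → ∀ i, vs i = 0)
    (hEx2 : ∀ {U V U' V' : C} (f : U ⟶ V) (g : U' ⟶ V'),
      (∃ (a : U ⊗ U' ⟶ 𝟙_ C) (b : 𝟙_ C ⟶ V ⊗ V'), (f ⊗ₘ g) = a ≫ b) →
      ((∃ (n : ℕ) (as : Fin n → (U ⟶ 𝟙_ C)) (bs : Fin n → (𝟙_ C ⟶ V)),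
          f = ∑ i, as i ≫ bs i) ∧
       (∃ (m : ℕ) (cs : Fin m → (U' ⟶ 𝟙_ C)) (ds : Fin m → (𝟙_ C ⟶ V')),
          g = ∑ i, cs i ≫ ds i))) :
    ∀ {U : C} (u : U ⟶ 𝟙_ C), u ≠ 0 → ∀ {V : C} (f : U ⟶ V),
      (u ▷ U) ≫ (λ_ U).hom ≫ f = (U ◁ u) ≫ (ρ_ U).hom ≫ f →
      ∃! v : 𝟙_ C ⟶ V, f = u ≫ v := by
  classical
  intro U u hu V f hf
  -- Cancellation: `u ≫ w = 0 → w = 0`, by (Ex1) with the single-element family `u`.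
  have hcancel : ∀ {W : C} (w : 𝟙_ C ⟶ W), u ≫ w = 0 → w = 0 := by
    intro W w h
    have li : LinearIndependent k (fun _ : Fin 1 => u) :=
      linearIndependent_unique_iff.2 hu
    simpa using hEx1 U W 1 (fun _ => u) (fun _ => w) li (by simpa using h) 0
  -- Step 1: `f ⊗ û` factors through the unit (where `û` is the mate of `u`), hence by (Ex2)
  -- `f` is a sum of morphisms factoring through the unit.
  obtain ⟨⟨n, as, bs, hfab⟩, -⟩ :=
    hEx2 f (η_ U (Uᘁ) ≫ (u ▷ (Uᘁ)) ≫ (λ_ (Uᘁ)).hom)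
      ⟨(ρ_ U).hom ≫ u, η_ U (Uᘁ) ≫ (f ▷ (Uᘁ)), aux_fact u f hf⟩
  -- Step 2: a basis of `Hom(U, 𝟙)` containing `u`.
  have hsing : LinearIndepOn k id ({u} : Set (U ⟶ 𝟙_ C)) :=
    LinearIndepOn.singleton hu
  let ℬ := Module.Basis.extend hsing
  let c₀ : (hsing.extend (Set.subset_univ _)) :=
    ⟨u, hsing.subset_extend (Set.subset_univ _) rfl⟩
  have hc₀ : ℬ c₀ = u := Module.Basis.extend_apply_self hsing c₀
  let s : Finset (hsing.extend (Set.subset_univ _)) :=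
    insert c₀ (Finset.univ.biUnion fun i : Fin n => (ℬ.repr (as i)).support)
  have hc₀s : c₀ ∈ s := Finset.mem_insert_self _ _
  have hsupp : ∀ i : Fin n, (ℬ.repr (as i)).support ⊆ s := fun i c hc =>
    Finset.mem_insert_of_mem (Finset.mem_biUnion.2 ⟨i, Finset.mem_univ i, hc⟩)
  obtain ⟨Bf, hBf⟩ : ∃ Bf : (hsing.extend (Set.subset_univ _)) → (𝟙_ C ⟶ V),
      ∀ c, Bf c = ∑ i, ℬ.repr (as i) c • bs i := ⟨_, fun _ => rfl⟩
  have hrep : ∀ i, as i = ∑ c ∈ s, ℬ.repr (as i) c • ℬ c := by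
    intro i
    have h1 := ℬ.linearCombination_repr (as i)
    rw [Finsupp.linearCombination_apply] at h1
    calc as i = ∑ c ∈ (ℬ.repr (as i)).support, ℬ.repr (as i) c • ℬ c := h1.symm
      _ = ∑ c ∈ s, ℬ.repr (as i) c • ℬ c :=
        Finset.sum_subset (hsupp i)
          (fun c _ hc => by rw [Finsupp.notMem_support_iff.1 hc, zero_smul])
  have hfB : f = ∑ c ∈ s, ℬ c ≫ Bf c := by
    calc f = ∑ i, as i ≫ bs i := hfab
      _ = ∑ i, (∑ c ∈ s, ℬ.repr (as i) c • ℬ c) ≫ bs i :=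
        Finset.sum_congr rfl fun i _ => by rw [← hrep i]
      _ = ∑ c ∈ s, ℬ c ≫ Bf c := by
        simp only [Preadditive.sum_comp, Linear.smul_comp]
        rw [Finset.sum_comm]
        refine Finset.sum_congr rfl fun c _ => ?_
        rw [hBf c]
        simp only [Preadditive.comp_sum, Linear.comp_smul]
  -- Step 3: transport the coequalizing identity through the duality `T`.
  have hf' : (u ▷ U) ≫ (λ_ U).hom ≫ (∑ c ∈ s, ℬ c ≫ Bf c)
      = (U ◁ u) ≫ (ρ_ U).hom ≫ (∑ c ∈ s, ℬ c ≫ Bf c) := by rw [← hfB]; exact hf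
  have hL : (ρ_ U).inv ≫ (U ◁ η_ U (Uᘁ)) ≫ (α_ U U (Uᘁ)).inv
        ≫ (((u ▷ U) ≫ (λ_ U).hom ≫ (∑ c ∈ s, ℬ c ≫ Bf c)) ▷ (Uᘁ))
      = ∑ c ∈ s, u ≫ (η_ U (Uᘁ) ≫ ((ℬ c ≫ Bf c) ▷ (Uᘁ))) := by
    simp only [Preadditive.comp_sum, sum_whiskerRight]
    exact Finset.sum_congr rfl fun c _ => aux_TB1 u (ℬ c ≫ Bf c)
  have hR : (ρ_ U).inv ≫ (U ◁ η_ U (Uᘁ)) ≫ (α_ U U (Uᘁ)).inv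
        ≫ (((U ◁ u) ≫ (ρ_ U).hom ≫ (∑ c ∈ s, ℬ c ≫ Bf c)) ▷ (Uᘁ))
      = ∑ c ∈ s, ℬ c ≫ ((ρ_ (𝟙_ C)).inv
          ≫ (𝟙_ C ◁ (η_ U (Uᘁ) ≫ (u ▷ (Uᘁ)) ≫ (λ_ (Uᘁ)).hom)) ≫ (Bf c ▷ (Uᘁ))) := by
    simp only [Preadditive.comp_sum, sum_whiskerRight]
    exact Finset.sum_congr rfl fun c _ => aux_TB2 u (ℬ c) (Bf c)
  -- opaque abbreviations for the two coefficient families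
  obtain ⟨S0, hS0⟩ : ∃ S0 : 𝟙_ C ⟶ V ⊗ (Uᘁ),
      S0 = ∑ c ∈ s, η_ U (Uᘁ) ≫ ((ℬ c ≫ Bf c) ▷ (Uᘁ)) := ⟨_, rfl⟩
  obtain ⟨Tf, hTf⟩ : ∃ Tf : (hsing.extend (Set.subset_univ _)) → (𝟙_ C ⟶ V ⊗ (Uᘁ)),
      ∀ c, Tf c = (ρ_ (𝟙_ C)).inv
        ≫ (𝟙_ C ◁ (η_ U (Uᘁ) ≫ (u ▷ (Uᘁ)) ≫ (λ_ (Uᘁ)).hom)) ≫ (Bf c ▷ (Uᘁ)) :=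
    ⟨_, fun _ => rfl⟩
  have key : u ≫ S0 = ∑ c ∈ s, ℬ c ≫ Tf c := by
    calc u ≫ S0 = ∑ c ∈ s, u ≫ (η_ U (Uᘁ) ≫ ((ℬ c ≫ Bf c) ▷ (Uᘁ))) := by
          rw [hS0]; exact Preadditive.comp_sum _ _ _
      _ = _ := hL.symm
      _ = _ := by rw [hf']
      _ = ∑ c ∈ s, ℬ c ≫ ((ρ_ (𝟙_ C)).inv
          ≫ (𝟙_ C ◁ (η_ U (Uᘁ) ≫ (u ▷ (Uᘁ)) ≫ (λ_ (Uᘁ)).hom)) ≫ (Bf c ▷ (Uᘁ))) := hR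
      _ = ∑ c ∈ s, ℬ c ≫ Tf c :=
        Finset.sum_congr rfl fun c _ => by rw [hTf c]
  -- Step 4: apply (Ex1) to the family indexed by `s`.
  have hsum0 : ∑ c ∈ s, ℬ c ≫ ((if c = c₀ then S0 else 0) - Tf c) = 0 := by
    simp only [Preadditive.comp_sub]
    rw [Finset.sum_sub_distrib, sub_eq_zero]
    rw [Finset.sum_eq_single_of_mem c₀ hc₀s
      (fun b _ hb => by rw [if_neg hb, Limits.comp_zero])]
    rw [if_pos rfl, hc₀]
    exact key
  have hli : LinearIndependent k (fun x : s => ℬ x) :=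
    ℬ.linearIndependent.comp Subtype.val Subtype.val_injective
  have hvs : ∀ c ∈ s, (if c = c₀ then S0 else 0) - Tf c = 0 :=
    aux_ex1 hEx1 s ⇑ℬ (fun c => (if c = c₀ then S0 else 0) - Tf c) hli hsum0
  -- Step 5: all coefficients away from `u` vanish.
  have hB0 : ∀ c ∈ s, c ≠ c₀ → Bf c = 0 := by
    intro c hc hne
    have hj := hvs c hc
    rw [if_neg hne, zero_sub, neg_eq_zero] at hj
    rw [hTf c] at hj
    have hP := aux_P u (Bf c)
    rw [hj] at hP
    simp only [MonoidalPreadditive.zero_whiskerRight, Limits.zero_comp,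
      Limits.comp_zero] at hP
    exact hcancel (Bf c) hP.symm
  have hfinal : f = u ≫ Bf c₀ := by
    rw [hfB, Finset.sum_eq_single_of_mem c₀ hc₀s
      (fun b hb hbne => by rw [hB0 b hb hbne, Limits.comp_zero]), hc₀]
  refine ⟨Bf c₀, hfinal, fun v' hv' => ?_⟩
  have h0 : u ≫ (v' - Bf c₀) = 0 := by
    rw [Preadditive.comp_sub, ← hv', ← hfinal, sub_self]
  exact sub_eq_zero.mp (hcancel _ h0)
end
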